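/- arXiv:2404.16954 — 5 statements merged into one kernel-verified Lean document; each statement's English description precedes it below -/
import Mathlib

section
/- Let (Ω, 𝒜, P) be a probability space, 𝒢 ⊆ 𝒜 a sub-σ-algebra, S a real-valued random variable independent of 𝒢 with distribution ν, T a 𝒢-measurable real-valued random variable, and B a Bernoulli(p) random variable (p ∈ (0,1]) independent of the σ-algebra generated by 𝒢 together with S. Fix λ ∈ ℝ and define Z = 1{S ≤ T}·1{S > λ} + (1/p)·B·1{S > T}·1{S > λ}. Then E[Z | 𝒢] = ν((λ, ∞)) almost surely; in particular E[Z] = ν((λ, ∞)). -/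
/-!
Condition first on `ℋ = 𝒢 ⊔ σ(S)`, with respect to which both events `{S ≤ T, S > λ}` and
`{S > T, S > λ}` are measurable. The coin `B` is independent of `ℋ`, so the reweighted term
`(1/p) B 1{S > T, S > λ}` has conditional expectation `1{S > T, S > λ}`, and hence
`E[Z | ℋ] = 1{S > λ}`. As `S` is independent of `𝒢`, the tower property then gives
`E[Z | 𝒢] = P(S > λ) = ν((λ, ∞))`.
-/

open MeasureTheory ProbabilityTheory

theorem eq_indicator_one_of_zero_one {α : Type*} {f : α → ℝ} (hf : ∀ a, f a = 0 ∨ f a = 1) :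
    f = {a | f a = 1}.indicator 1 := by
  funext a
  rcases hf a with h | h <;> simp [h]

namespace MeasureTheory

variable {Ω : Type*} {m₁ m₂ : MeasurableSpace Ω} [mΩ : MeasurableSpace Ω] {μ : Measure Ω}

theorem integral_eq_measureReal_of_zero_one {B : Ω → ℝ} (hB : Measurable B)
    (hB01 : ∀ ω, B ω = 0 ∨ B ω = 1) : ∫ ω, B ω ∂μ = μ.real {ω | B ω = 1} := by
  conv_lhs => rw [eq_indicator_one_of_zero_one hB01]
  exact integral_indicator_one (hB (measurableSet_singleton 1))

theorem condExp_mul_of_indep [IsFiniteMeasure μ] (hle₁ : m₁ ≤ mΩ) (hle₂ : m₂ ≤ mΩ)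
    {f g : Ω → ℝ} (hf : StronglyMeasurable[m₁] f) (hfi : Integrable f μ)
    (hg : StronglyMeasurable[m₂] g) (hfg : Integrable (f * g) μ) (hindep : Indep m₁ m₂ μ) :
    μ[f * g | m₂] =ᵐ[μ] (fun _ => μ[f]) * g :=
  (condExp_mul_of_stronglyMeasurable_right hg hfg hfi).trans
    ((condExp_indep_eq hle₁ hle₂ hf hindep).mul .rfl)

theorem condExp_comp_of_indep [IsFiniteMeasure μ] (hle : m₂ ≤ mΩ) {S : Ω → ℝ}
    (hS : Measurable S) (hindep : Indep (MeasurableSpace.comap S inferInstance) m₂ μ)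
    {f : ℝ → ℝ} (hf : StronglyMeasurable f) :
    μ[f ∘ S | m₂] =ᵐ[μ] fun _ => ∫ x, f x ∂(μ.map S) := by
  rw [integral_map hS.aemeasurable hf.aestronglyMeasurable]
  exact condExp_indep_eq hS.comap_le hle (hf.comp_measurable (comap_measurable S)) hindep

theorem condExp_indicator_add_inv_smul_mul_indicator_of_indep [IsFiniteMeasure μ]
    (hle : m₂ ≤ mΩ) {B : Ω → ℝ} (hB : Measurable B) (hB01 : ∀ ω, B ω = 0 ∨ B ω = 1)
    (hindep : Indep (MeasurableSpace.comap B inferInstance) m₂ μ) {p : ℝ} (hp : p ≠ 0)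
    (hBp : μ.real {ω | B ω = 1} = p) {s₁ s₂ : Set Ω} (hs₁ : MeasurableSet[m₂] s₁)
    (hs₂ : MeasurableSet[m₂] s₂) :
    μ[s₁.indicator 1 + p⁻¹ • (B * s₂.indicator 1) | m₂]
      =ᵐ[μ] s₁.indicator 1 + s₂.indicator 1 := by
  have hs₁i : Integrable (s₁.indicator 1) μ :=
    (integrable_const (1 : ℝ)).indicator (hle _ hs₁)
  have hBi : Integrable B μ := by
    rw [eq_indicator_one_of_zero_one hB01]
    exact (integrable_const 1).indicator (hB (measurableSet_singleton 1))
  have hBs₂i : Integrable (B * s₂.indicator 1) μ :=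
    hBi.mul_bdd (stronglyMeasurable_one.indicator (hle _ hs₂)).aestronglyMeasurable
      (ae_of_all _ fun ω => (norm_indicator_le_norm_self 1 ω).trans_eq norm_one)
  have hcoin : μ[B * s₂.indicator 1 | m₂] =ᵐ[μ] (fun _ => p) * s₂.indicator 1 := by
    simpa only [integral_eq_measureReal_of_zero_one hB hB01, hBp] using
      condExp_mul_of_indep hB.comap_le hle (comap_measurable B).stronglyMeasurable hBi
        (stronglyMeasurable_one.indicator hs₂) hBs₂i hindep
  filter_upwards [condExp_add hs₁i (hBs₂i.smul p⁻¹) m₂,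
    condExp_smul p⁻¹ (B * s₂.indicator 1) m₂, hcoin] with ω hadd hsmul hc
  rw [hadd, Pi.add_apply, condExp_of_stronglyMeasurable hle
    (stronglyMeasurable_one.indicator hs₁) hs₁i, hsmul, Pi.smul_apply, hc]
  simp [hp]

end MeasureTheory

/-- Single-step unbiasedness of the importance-sampled false-positive indicator:
`S` is a fresh OOD score independent of the past `𝒢` with distribution `ν`,
`T` is the `𝒢`-measurable previous threshold, `B` is a Bernoulli(p) labeling coin
independent of `𝒢 ⊔ σ(S)`, and
`Z = 1{S ≤ T}·1{S > λ} + (1/p)·B·1{S > T}·1{S > λ}`.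
Then `E[Z | 𝒢] = ν((λ, ∞))` a.s., and in particular `E[Z] = ν((λ, ∞))`. -/
theorem stmt_0
    {Ω : Type*} (𝒢 : MeasurableSpace Ω) [m : MeasurableSpace Ω] (h𝒢 : 𝒢 ≤ m)
    (P : Measure Ω) [IsProbabilityMeasure P]
    (S T B : Ω → ℝ) (ν : Measure ℝ) (p lam : ℝ)
    (hp : p ∈ Set.Ioc (0 : ℝ) 1)
    (hS : Measurable S)
    (hSν : P.map S = ν)
    (hSindep : Indep (MeasurableSpace.comap S inferInstance) 𝒢 P)
    (hT : Measurable[𝒢] T)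
    (hB : Measurable B)
    (hB01 : ∀ ω, B ω = 0 ∨ B ω = 1)
    (hBp : P {ω | B ω = 1} = ENNReal.ofReal p)
    (hBindep : Indep (MeasurableSpace.comap B inferInstance)
      (𝒢 ⊔ MeasurableSpace.comap S inferInstance) P)
    (Z : Ω → ℝ)
    (hZ : ∀ ω, Z ω = (if S ω ≤ T ω ∧ lam < S ω then (1 : ℝ) else 0)
      + (1 / p) * B ω * (if T ω < S ω ∧ lam < S ω then (1 : ℝ) else 0)) :
    P[Z | 𝒢] =ᵐ[P] (fun _ => (ν (Set.Ioi lam)).toReal)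
      ∧ ∫ ω, Z ω ∂P = (ν (Set.Ioi lam)).toReal := by
  have hSℋ : Measurable[𝒢 ⊔ MeasurableSpace.comap S inferInstance] S :=
    Measurable.of_comap_le le_sup_right
  have hTℋ : Measurable[𝒢 ⊔ MeasurableSpace.comap S inferInstance] T :=
    hT.mono le_sup_left le_rfl
  set A₁ := {ω | S ω ≤ T ω ∧ lam < S ω}
  set A₂ := {ω | T ω < S ω ∧ lam < S ω}
  have hZ_eq : Z = A₁.indicator 1 + p⁻¹ • (B * A₂.indicator 1) := by
    funext ω
    simp [hZ, Set.indicator_apply, A₁, A₂]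
  have hZℋ : P[Z | 𝒢 ⊔ MeasurableSpace.comap S inferInstance]
      =ᵐ[P] (Set.Ioi lam).indicator 1 ∘ S := by
    rw [hZ_eq]
    refine (condExp_indicator_add_inv_smul_mul_indicator_of_indep (sup_le h𝒢 hS.comap_le) hB
      hB01 hBindep hp.1.ne' (by rw [measureReal_def, hBp, ENNReal.toReal_ofReal hp.1.le])
      ((measurableSet_le hSℋ hTℋ).inter (measurableSet_lt measurable_const hSℋ))
      ((measurableSet_lt hTℋ hSℋ).inter (measurableSet_lt measurable_const hSℋ))).trans
      (ae_of_all _ fun ω => ?_)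
    rcases le_or_gt (S ω) (T ω) with hST | hST
    · simp [Set.indicator_apply, hST, hST.not_gt]
    · simp [Set.indicator_apply, hST, hST.not_ge]
  have hZ𝒢 : P[Z | 𝒢] =ᵐ[P] fun _ => (ν (Set.Ioi lam)).toReal :=
    calc P[Z | 𝒢] =ᵐ[P] P[P[Z | 𝒢 ⊔ MeasurableSpace.comap S inferInstance] | 𝒢] :=
          (condExp_condExp_of_le le_sup_left (sup_le h𝒢 hS.comap_le)).symm
      _ =ᵐ[P] P[(Set.Ioi lam).indicator 1 ∘ S | 𝒢] := condExp_congr_ae hZℋ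
      _ =ᵐ[P] _ := condExp_comp_of_indep h𝒢 hS hSindep
          (stronglyMeasurable_one.indicator measurableSet_Ioi)
      _ = _ := by rw [hSν, integral_indicator_one measurableSet_Ioi]; rfl
  refine ⟨hZ𝒢, ?_⟩
  rw [← integral_condExp h𝒢, integral_congr_ae hZ𝒢]
  simp
end

section
/- Let Λ be a finite nonempty index set with L = |Λ|, let (F_t)_{t≥0} be a filtration, and for each λ ∈ Λ let (M_t(λ))_{t≥0} be a martingale with respect to (F_t)_{t≥0} with M_0(λ) = 0 and |M_t(λ) − M_{t−1}(λ)| ≤ ρ_t almost surely, for a common sequence of positive constants (ρ_t)_{t≥1}. Write V_t = Σ_{i=1}^t ρ_i². Fix δ ∈ (0,1) and let t_0 = min{u ≥ 1 : V_u ≥ 173 log(4L/δ)}. Then with probability at least 1 − δ, simultaneously for all λ ∈ Λ and all t ≥ t_0, |M_t(λ)| < sqrt( 3 V_t ( 2 log log(3 V_t) + log(2L/δ) ) ). -/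
open MeasureTheory ProbabilityTheory ENNReal

/-!
For each `c`, Hoeffding's convexity bound on an increment and the orthogonality of martingale
increments to the past give `E exp (c N_n) ≤ exp (c² V_n / 2)`; as `exp (c N)` is a submartingale,
Doob's maximal inequality turns this into `P (∃ t, V_t ≤ B ∧ N_t ≥ a) ≤ exp (-a² / 2B)`.
Peeling over the epochs `V_t ∈ [b_k, 3/2 b_k]`, `b_k = V_{t₀} (3/2)^k`, with threshold
`a = lilBound x b_k` costs `2 / (x log² (3 b_k))` in epoch `k`. The choice of `t₀` makes
`log (3 b_k) ≥ 6 + k / 3`, so the total is at most `2 / x = δ / L`, and a union bound over `Λ`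
finishes the proof.
-/

open Real Finset

theorem Real.exp_mul_le_cosh_add_div_mul_sinh {c d r : ℝ} (hd : |d| ≤ r) :
    exp (c * d) ≤ cosh (c * r) + d / r * sinh (c * r) := by
  rcases ((abs_nonneg d).trans hd).eq_or_lt with rfl | hr
  · simp [abs_nonpos_iff.1 hd]
  obtain ⟨hd₁, hd₂⟩ := abs_le.1 hd
  -- `c d` is the convex combination of `∓ c r` with weights `(r ∓ d) / 2r`
  have h := convexOn_exp.2 (Set.mem_univ (-(c * r))) (Set.mem_univ (c * r))
    (div_nonneg (sub_nonneg.2 hd₂) (by positivity) : 0 ≤ (r - d) / (2 * r))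
    (div_nonneg (by linarith) (by positivity) : 0 ≤ (r + d) / (2 * r)) (by field_simp; ring)
  simp only [smul_eq_mul] at h
  calc exp (c * d) = exp ((r - d) / (2 * r) * -(c * r) + (r + d) / (2 * r) * (c * r)) := by
        congr 1; field_simp; ring
    _ ≤ _ := h
    _ = _ := by rw [cosh_eq, sinh_eq]; field_simp; ring

theorem sum_range_one_div_add_sq_le {a : ℝ} (ha : 1 < a) (n : ℕ) :
    ∑ k ∈ range n, 1 / (a + k) ^ 2 ≤ 1 / (a - 1) := by
  suffices ∑ k ∈ range n, 1 / (a + k) ^ 2 ≤ 1 / (a - 1) - 1 / (a - 1 + n) from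
    this.trans (sub_le_self _ (one_div_nonneg.2 (by have : (0 : ℝ) ≤ n := n.cast_nonneg; linarith)))
  induction n with
  | zero => simp
  | succ n ih =>
    have hp : 0 < a - 1 + n := by have : (0 : ℝ) ≤ n := n.cast_nonneg; linarith
    have hstep : 1 / (a + n) ^ 2 ≤ 1 / (a - 1 + n) - 1 / (a - 1 + (n + 1 : ℕ)) := by
      rw [Nat.cast_succ, show a - 1 + (n + 1) = a + n by ring,
        show 1 / (a - 1 + n) - 1 / (a + n) = 1 / ((a - 1 + n) * (a + n)) by field_simp; ring]
      exact one_div_le_one_div_of_le (by positivity) (by nlinarith)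
    rw [sum_range_succ]
    linarith

noncomputable def lilBound (x v : ℝ) : ℝ :=
  √(3 * v * (2 * Real.log (Real.log (3 * v)) + Real.log x))

section lilBound

variable {x v : ℝ}

theorem lilBound_le_lilBound (hx : 1 ≤ x) (hv : 0 < v) (hlog : 1 ≤ Real.log (3 * v)) {w : ℝ}
    (hvw : v ≤ w) : lilBound x v ≤ lilBound x w := by
  have hloglog := Real.log_nonneg hlog
  have hlog' : Real.log (3 * v) ≤ Real.log (3 * w) := Real.log_le_log (by positivity) (by linarith)
  have hloglog' : Real.log (Real.log (3 * v)) ≤ Real.log (Real.log (3 * w)) :=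
    Real.log_le_log (by linarith) hlog'
  exact sqrt_le_sqrt (mul_le_mul (by linarith) (by linarith) (by linarith [Real.log_nonneg hx])
    (by linarith))

theorem exp_neg_lilBound_sq_div (hx : 1 ≤ x) (hv : 0 < v) (hlog : 1 ≤ Real.log (3 * v)) :
    exp (-(lilBound x v ^ 2 / (3 * v))) = (x * Real.log (3 * v) ^ 2)⁻¹ := by
  have hw : 0 < Real.log (3 * v) := by linarith
  have hpos : 0 < x * Real.log (3 * v) ^ 2 := by positivity
  have hin :
      2 * Real.log (Real.log (3 * v)) + Real.log x = Real.log (x * Real.log (3 * v) ^ 2) := by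
    rw [Real.log_mul (x := x) (by positivity) (by positivity), Real.log_pow]; push_cast; ring
  have hnonneg : 0 ≤ 3 * v * (2 * Real.log (Real.log (3 * v)) + Real.log x) :=
    mul_nonneg (by positivity) (by rw [hin]; exact Real.log_nonneg (by nlinarith))
  rw [lilBound, sq_sqrt hnonneg, mul_div_cancel_left₀ _ (by positivity), hin, exp_neg,
    Real.exp_log hpos]

end lilBound

section Martingale

variable {Ω ι : Type*} {m : MeasurableSpace Ω} {μ : Measure Ω} [IsFiniteMeasure μ]

theorem MeasureTheory.Martingale.submartingale_comp_convexOn [Preorder ι] {ℱ : Filtration ι m}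
    {f : ι → Ω → ℝ} (hf : Martingale f ℱ μ) {φ : ℝ → ℝ} (hφ : ConvexOn ℝ Set.univ φ)
    (hφc : Continuous φ) (hint : ∀ i, Integrable (fun ω => φ (f i ω)) μ) :
    Submartingale (fun i ω => φ (f i ω)) ℱ μ := by
  refine ⟨fun i => hφc.comp_stronglyMeasurable (hf.stronglyAdapted i), fun i j hij => ?_, hint⟩
  filter_upwards [hf.condExp_ae_eq hij, hφ.map_condExp_le_univ (ℱ.le i) hφc.lowerSemicontinuous
    (hf.integrable j) (hint j)] with ω h₁ h₂
  simpa [h₁, Function.comp_def] using h₂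

theorem MeasureTheory.Martingale.integral_mul_sub_eq_zero [Preorder ι] {ℱ : Filtration ι m}
    {f : ι → Ω → ℝ} (hf : Martingale f ℱ μ) {i j : ι} (hij : i ≤ j) {X : Ω → ℝ}
    (hX : StronglyMeasurable[ℱ i] X) (hXf : Integrable (X * (f j - f i)) μ) :
    ∫ ω, X ω * (f j ω - f i ω) ∂μ = 0 := by
  have hzero : μ[f j - f i | ℱ i] =ᵐ[μ] 0 := by
    filter_upwards [condExp_sub (hf.integrable j) (hf.integrable i) (ℱ i),
      hf.condExp_ae_eq hij] with ω h₁ h₂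
    simp [h₁, h₂, condExp_of_stronglyMeasurable (ℱ.le i) (hf.stronglyAdapted i) (hf.integrable i)]
  calc ∫ ω, X ω * (f j ω - f i ω) ∂μ = ∫ ω, μ[X * (f j - f i) | ℱ i] ω ∂μ :=
        (integral_condExp (ℱ.le i)).symm
    _ = ∫ ω, X ω * μ[f j - f i | ℱ i] ω ∂μ := integral_congr_ae
        (condExp_mul_of_stronglyMeasurable_left hX hXf ((hf.integrable j).sub (hf.integrable i)))
    _ = ∫ _, (0 : ℝ) ∂μ := integral_congr_ae (hzero.mono fun ω h => by simp [h])
    _ = 0 := integral_zero _ _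

end Martingale

section BoundedIncrements

variable {Ω : Type*} {m : MeasurableSpace Ω} {μ : Measure Ω} {ℱ : Filtration ℕ m}
  {N : ℕ → Ω → ℝ} {ρ V : ℕ → ℝ}

theorem ae_abs_le_sum_of_abs_sub_le (hN0 : N 0 = 0)
    (hinc : ∀ t, ∀ᵐ ω ∂μ, |N (t + 1) ω - N t ω| ≤ ρ (t + 1)) (t : ℕ) :
    ∀ᵐ ω ∂μ, |N t ω| ≤ ∑ i ∈ Icc 1 t, ρ i := by
  induction t with
  | zero => simp [hN0]
  | succ t ih =>
    filter_upwards [ih, hinc t] with ω h₁ h₂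
    rw [sum_Icc_succ_top (by omega)]
    calc |N (t + 1) ω| = |N t ω + (N (t + 1) ω - N t ω)| := by ring_nf
      _ ≤ |N t ω| + |N (t + 1) ω - N t ω| := abs_add_le _ _
      _ ≤ _ := add_le_add h₁ h₂

theorem ae_norm_exp_mul_le (hN0 : N 0 = 0)
    (hinc : ∀ t, ∀ᵐ ω ∂μ, |N (t + 1) ω - N t ω| ≤ ρ (t + 1)) (c : ℝ) (t : ℕ) :
    ∀ᵐ ω ∂μ, ‖exp (c * N t ω)‖ ≤ exp (|c| * ∑ i ∈ Icc 1 t, ρ i) := by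
  filter_upwards [ae_abs_le_sum_of_abs_sub_le hN0 hinc t] with ω h
  rw [norm_of_nonneg (exp_nonneg _), exp_le_exp]
  calc c * N t ω ≤ |c| * |N t ω| := by rw [← abs_mul]; exact le_abs_self _
    _ ≤ _ := mul_le_mul_of_nonneg_left h (abs_nonneg c)

theorem integrable_exp_mul_of_abs_sub_le [IsFiniteMeasure μ] (hN : StronglyAdapted ℱ N)
    (hN0 : N 0 = 0) (hinc : ∀ t, ∀ᵐ ω ∂μ, |N (t + 1) ω - N t ω| ≤ ρ (t + 1)) (c : ℝ) (t : ℕ) :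
    Integrable (fun ω => exp (c * N t ω)) μ :=
  .of_bound (continuous_exp.comp_stronglyMeasurable
    (((hN t).mono (ℱ.le t)).const_mul c)).aestronglyMeasurable _ (ae_norm_exp_mul_le hN0 hinc c t)

theorem integral_exp_mul_succ_le [IsFiniteMeasure μ] (hN : Martingale N ℱ μ) (hN0 : N 0 = 0)
    (hinc : ∀ t, ∀ᵐ ω ∂μ, |N (t + 1) ω - N t ω| ≤ ρ (t + 1)) (c : ℝ) (n : ℕ) :
    ∫ ω, exp (c * N (n + 1) ω) ∂μ ≤ cosh (c * ρ (n + 1)) * ∫ ω, exp (c * N n ω) ∂μ := by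
  have hint := integrable_exp_mul_of_abs_sub_le hN.stronglyAdapted hN0 hinc c
  set r := ρ (n + 1)
  set X : Ω → ℝ := fun ω => exp (c * N n ω)
  set D : Ω → ℝ := fun ω => N (n + 1) ω - N n ω
  have hX : StronglyMeasurable[ℱ n] X :=
    continuous_exp.comp_stronglyMeasurable ((hN.stronglyAdapted n).const_mul c)
  have hXD : Integrable (X * D) μ :=
    ((hN.integrable (n + 1)).sub (hN.integrable n)).bdd_mul
      (hX.mono (ℱ.le n)).aestronglyMeasurable (ae_norm_exp_mul_le hN0 hinc c n)
  have hle : (fun ω => exp (c * N (n + 1) ω)) ≤ᵐ[μ]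
      fun ω => cosh (c * r) * X ω + sinh (c * r) / r * (X * D) ω := by
    filter_upwards [hinc n] with ω hω
    calc exp (c * N (n + 1) ω) = X ω * exp (c * D ω) := by simp only [X, D, ← exp_add]; ring_nf
      _ ≤ X ω * (cosh (c * r) + D ω / r * sinh (c * r)) := by
          gcongr; exact exp_mul_le_cosh_add_div_mul_sinh hω
      _ = _ := by simp only [Pi.mul_apply]; ring
  calc ∫ ω, exp (c * N (n + 1) ω) ∂μ
      ≤ ∫ ω, (cosh (c * r) * X ω + sinh (c * r) / r * (X * D) ω) ∂μ :=
        integral_mono_ae (hint _) (((hint n).const_mul _).add (hXD.const_mul _)) hle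
    _ = cosh (c * r) * ∫ ω, X ω ∂μ := by
        rw [integral_add ((hint n).const_mul _) (hXD.const_mul _), integral_const_mul,
          integral_const_mul, Pi.mul_def, hN.integral_mul_sub_eq_zero n.le_succ hX hXD, mul_zero,
          add_zero]

theorem integral_exp_mul_le [IsProbabilityMeasure μ] (hN : Martingale N ℱ μ) (hN0 : N 0 = 0)
    (hinc : ∀ t, ∀ᵐ ω ∂μ, |N (t + 1) ω - N t ω| ≤ ρ (t + 1))
    (hV : ∀ t, V t = ∑ i ∈ Icc 1 t, ρ i ^ 2) (c : ℝ) (n : ℕ) :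
    ∫ ω, exp (c * N n ω) ∂μ ≤ exp (c ^ 2 * V n / 2) := by
  induction n with
  | zero => simp [hN0, hV]
  | succ n ih =>
    calc ∫ ω, exp (c * N (n + 1) ω) ∂μ ≤ cosh (c * ρ (n + 1)) * ∫ ω, exp (c * N n ω) ∂μ :=
          integral_exp_mul_succ_le hN hN0 hinc c n
      _ ≤ exp ((c * ρ (n + 1)) ^ 2 / 2) * exp (c ^ 2 * V n / 2) :=
          mul_le_mul (cosh_le_exp_half_sq _) ih (integral_nonneg fun _ => (exp_pos _).le)
            (exp_pos _).le
      _ = exp (c ^ 2 * V (n + 1) / 2) := by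
          rw [← exp_add, hV (n + 1), hV n, sum_Icc_succ_top (by omega)]; ring_nf

theorem measure_exists_le_ge_le_exp [IsProbabilityMeasure μ] (hN : Martingale N ℱ μ)
    (hN0 : N 0 = 0) (hinc : ∀ t, ∀ᵐ ω ∂μ, |N (t + 1) ω - N t ω| ≤ ρ (t + 1))
    (hV : ∀ t, V t = ∑ i ∈ Icc 1 t, ρ i ^ 2) {c : ℝ} (hc : 0 ≤ c) (a : ℝ) (n : ℕ) :
    μ {ω | ∃ t ≤ n, a ≤ N t ω} ≤ ENNReal.ofReal (exp (c ^ 2 * V n / 2 - c * a)) := by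
  have hsub : Submartingale (fun t ω => exp (c * N t ω)) ℱ μ :=
    (hN.smul c).submartingale_comp_convexOn convexOn_exp continuous_exp
      (integrable_exp_mul_of_abs_sub_le hN.stronglyAdapted hN0 hinc c)
  set ε : NNReal := (exp (c * a)).toNNReal
  have hε : (ε : ℝ) = exp (c * a) := Real.coe_toNNReal _ (exp_nonneg _)
  have hsubset : {ω | ∃ t ≤ n, a ≤ N t ω} ⊆ {ω | exp (c * a) ≤
      (range (n + 1)).sup' nonempty_range_add_one fun k => exp (c * N k ω)} := by
    rintro ω ⟨t, htn, hta⟩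
    refine le_trans ?_ (le_sup' (fun k => exp (c * N k ω)) (mem_range.2 (Nat.lt_succ_of_le htn)))
    exact exp_le_exp.2 (mul_le_mul_of_nonneg_left hta hc)
  have hdoob := (maximal_ineq hsub (fun t ω => (exp_pos _).le) (ε := ε) n).trans
    (ofReal_le_ofReal ((setIntegral_le_integral (integrable_exp_mul_of_abs_sub_le
      hN.stronglyAdapted hN0 hinc c n) (ae_of_all _ fun _ => (exp_pos _).le)).trans
      (integral_exp_mul_le hN hN0 hinc hV c n)))
  have hε0 : (ε : ℝ≥0∞) ≠ 0 := by simp [ε, exp_pos]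
  rw [mul_comm, ← ENNReal.le_div_iff_mul_le (.inl hε0) (.inl coe_ne_top), ← ofReal_coe_nnreal, hε,
    ← ofReal_div_of_pos (exp_pos _), ← exp_sub] at hdoob
  exact (measure_mono hsubset).trans hdoob

theorem measure_exists_ge_le_exp [IsProbabilityMeasure μ] (hN : Martingale N ℱ μ) (hN0 : N 0 = 0)
    (hinc : ∀ t, ∀ᵐ ω ∂μ, |N (t + 1) ω - N t ω| ≤ ρ (t + 1))
    (hV : ∀ t, V t = ∑ i ∈ Icc 1 t, ρ i ^ 2) {B a : ℝ} (hB : 0 < B) (ha : 0 ≤ a) :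
    μ {ω | ∃ t, V t ≤ B ∧ a ≤ N t ω} ≤ ENNReal.ofReal (exp (-(a ^ 2 / (2 * B)))) := by
  set C : {n // V n ≤ B} → Set Ω := fun n => {ω | ∃ t ≤ (n : ℕ), a ≤ N t ω}
  have hC : Monotone C := fun n n' h ω ⟨t, ht, hω⟩ => ⟨t, ht.trans h, hω⟩
  calc μ {ω | ∃ t, V t ≤ B ∧ a ≤ N t ω} ≤ μ (⋃ n, C n) :=
        measure_mono fun ω ⟨t, ht, hω⟩ => Set.mem_iUnion.2 ⟨⟨t, ht⟩, t, le_rfl, hω⟩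
    _ = ⨆ n, μ (C n) := hC.directed_le.measure_iUnion
    _ ≤ _ := iSup_le fun n => (measure_exists_le_ge_le_exp hN hN0 hinc hV
          (by positivity : 0 ≤ a / B) a n).trans (ofReal_le_ofReal (exp_le_exp.2 ?_))
  calc (a / B) ^ 2 * V n / 2 - a / B * a ≤ (a / B) ^ 2 * B / 2 - a / B * a := by
        gcongr; exact n.2
    _ = -(a ^ 2 / (2 * B)) := by field_simp; ring

theorem measure_exists_abs_ge_le_two_mul_exp [IsProbabilityMeasure μ]
    (hN : Martingale N ℱ μ) (hN0 : N 0 = 0)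
    (hinc : ∀ t, ∀ᵐ ω ∂μ, |N (t + 1) ω - N t ω| ≤ ρ (t + 1))
    (hV : ∀ t, V t = ∑ i ∈ Icc 1 t, ρ i ^ 2) {B a : ℝ} (hB : 0 < B) (ha : 0 ≤ a) :
    μ {ω | ∃ t, V t ≤ B ∧ a ≤ |N t ω|} ≤ 2 * ENNReal.ofReal (exp (-(a ^ 2 / (2 * B)))) := by
  have hinc' : ∀ t, ∀ᵐ ω ∂μ, |(-N) (t + 1) ω - (-N) t ω| ≤ ρ (t + 1) := fun t => by
    filter_upwards [hinc t] with ω h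
    rwa [Pi.neg_apply, Pi.neg_apply, Pi.neg_apply, Pi.neg_apply, ← abs_neg, neg_sub_neg, neg_sub]
  calc μ {ω | ∃ t, V t ≤ B ∧ a ≤ |N t ω|}
      ≤ μ ({ω | ∃ t, V t ≤ B ∧ a ≤ N t ω} ∪ {ω | ∃ t, V t ≤ B ∧ a ≤ (-N) t ω}) :=
        measure_mono fun ω ⟨t, ht, hω⟩ => (le_abs.1 hω).imp (⟨t, ht, ·⟩) (⟨t, ht, ·⟩)
    _ ≤ _ := by
        rw [two_mul]
        exact (measure_union_le _ _).trans (add_le_add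
          (measure_exists_ge_le_exp hN hN0 hinc hV hB ha)
          (measure_exists_ge_le_exp hN.neg (by simp [hN0]) hinc' hV hB ha))

theorem measure_exists_lilBound_le_abs_le [IsProbabilityMeasure μ]
    (hN : Martingale N ℱ μ) (hN0 : N 0 = 0)
    (hinc : ∀ t, ∀ᵐ ω ∂μ, |N (t + 1) ω - N t ω| ≤ ρ (t + 1))
    (hV : ∀ t, V t = ∑ i ∈ Icc 1 t, ρ i ^ 2) {v₀ x : ℝ} (hv₀ : exp 6 ≤ 3 * v₀) (hx : 1 ≤ x) :
    μ {ω | ∃ t, v₀ ≤ V t ∧ lilBound x (V t) ≤ |N t ω|} ≤ ENNReal.ofReal (2 / x) := by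
  have hv₀pos : 0 < v₀ := by linarith [exp_pos 6]
  set b : ℕ → ℝ := fun k => v₀ * (3 / 2) ^ k
  have hb : ∀ k, 0 < b k := fun k => by positivity
  have hlogb : ∀ k : ℕ, (18 + k) / 3 ≤ Real.log (3 * b k) := by
    intro k
    have h₁ : 6 ≤ Real.log (3 * v₀) := (Real.le_log_iff_exp_le (by positivity)).2 hv₀
    have h₂ : 1 / 3 ≤ Real.log (3 / 2) := by
      have := Real.one_sub_inv_le_log_of_pos (by norm_num : (0 : ℝ) < 3 / 2)
      norm_num at this ⊢; linarith
    rw [show 3 * b k = 3 * v₀ * (3 / 2) ^ k by ring, Real.log_mul (by positivity) (by positivity),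
      Real.log_pow]
    nlinarith [k.cast_nonneg (α := ℝ)]
  have hlogb₁ : ∀ k : ℕ, 1 ≤ Real.log (3 * b k) :=
    fun k => le_trans (by linarith [k.cast_nonneg (α := ℝ)]) (hlogb k)
  set E : ℕ → Set Ω := fun k => {ω | ∃ t, V t ≤ 3 / 2 * b k ∧ lilBound x (b k) ≤ |N t ω|}
  have hcover : {ω | ∃ t, v₀ ≤ V t ∧ lilBound x (V t) ≤ |N t ω|} ⊆ ⋃ k, E k := by
    rintro ω ⟨t, ht, hω⟩
    obtain ⟨k, hk₁, hk₂⟩ :=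
      exists_nat_pow_near ((one_le_div hv₀pos).2 ht) (by norm_num : (1 : ℝ) < 3 / 2)
    rw [le_div_iff₀ hv₀pos] at hk₁
    rw [div_lt_iff₀ hv₀pos, pow_succ] at hk₂
    refine Set.mem_iUnion.2 ⟨k, t, ?_, (lilBound_le_lilBound hx (hb k) (hlogb₁ k) ?_).trans hω⟩
    · simp only [b]; linarith
    · simp only [b]; linarith
  have hE : ∀ k : ℕ, μ (E k) ≤ ENNReal.ofReal (2 / x * (9 / (18 + k) ^ 2)) := by
    intro k
    refine (measure_exists_abs_ge_le_two_mul_exp hN hN0 hinc hV (a := lilBound x (b k))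
      (by positivity) (sqrt_nonneg _)).trans ?_
    rw [show 2 * (3 / 2 * b k) = 3 * b k by ring, exp_neg_lilBound_sq_div hx (hb k) (hlogb₁ k),
      ← ofReal_ofNat 2, ← ofReal_mul zero_le_two]
    refine ofReal_le_ofReal ?_
    calc 2 * (x * Real.log (3 * b k) ^ 2)⁻¹ = 2 / x * (1 / Real.log (3 * b k) ^ 2) := by
          rw [mul_inv]; ring
      _ ≤ 2 / x * (1 / ((18 + k) / 3) ^ 2) := by gcongr; exact hlogb k
      _ = 2 / x * (9 / (18 + k) ^ 2) := by field_simp; ring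
  calc μ {ω | ∃ t, v₀ ≤ V t ∧ lilBound x (V t) ≤ |N t ω|} ≤ ∑' k, μ (E k) :=
        (measure_mono hcover).trans (measure_iUnion_le _)
    _ ≤ ∑' k : ℕ, ENNReal.ofReal (2 / x * (9 / (18 + k) ^ 2)) := ENNReal.tsum_le_tsum hE
    _ ≤ ENNReal.ofReal (2 / x) := ENNReal.tsum_le_of_sum_range_le fun n => by
        rw [← ofReal_sum_of_nonneg fun k _ => by positivity, ← mul_sum]
        refine ofReal_le_ofReal (mul_le_of_le_one_right (by positivity) ?_)
        calc ∑ k ∈ range n, 9 / (18 + (k : ℝ)) ^ 2 = 9 * ∑ k ∈ range n, 1 / (18 + (k : ℝ)) ^ 2 := by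
              rw [mul_sum]; simp only [mul_one_div]
          _ ≤ 9 * (1 / (18 - 1)) := by gcongr; exact sum_range_one_div_add_sq_le (by norm_num) n
          _ ≤ 1 := by norm_num

end BoundedIncrements

theorem exp_six_le_three_mul {y v : ℝ} (hy : 4 ≤ y) (hv : 173 * Real.log y ≤ v) :
    exp 6 ≤ 3 * v := by
  have hlog4 : 2 * 0.6931471803 ≤ Real.log y := by
    calc 2 * 0.6931471803 ≤ 2 * Real.log 2 := by linarith [Real.log_two_gt_d9]
      _ = Real.log 4 := by rw [← Real.log_rpow two_pos]; norm_num
      _ ≤ Real.log y := Real.log_le_log (by norm_num) hy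
  calc exp 6 = exp 1 ^ 6 := by rw [← exp_nat_mul]; norm_num
    _ ≤ 2.7182818286 ^ 6 := by gcongr; exact exp_one_lt_d9.le
    _ ≤ 3 * v := by nlinarith

theorem monotone_of_eq_sum_sq {ρ V : ℕ → ℝ} (hV : ∀ t, V t = ∑ i ∈ Icc 1 t, ρ i ^ 2) :
    Monotone V := fun s t hst => by
  simp only [hV]
  exact sum_le_sum_of_subset_of_nonneg (Icc_subset_Icc_right hst) fun i _ _ => sq_nonneg _

theorem stmt_4_general
    {Ω : Type*} [m : MeasurableSpace Ω] (P : Measure Ω) [IsProbabilityMeasure P]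
    {Λ : Type*} [Fintype Λ] [Nonempty Λ]
    (ℱ : Filtration ℕ m) (M : Λ → ℕ → Ω → ℝ) (ρ : ℕ → ℝ) (V : ℕ → ℝ) (δ : ℝ) (t₀ : ℕ)
    (L : ℝ) (hL : L = Fintype.card Λ)
    (hM : ∀ l, Martingale (M l) ℱ P) (hM0 : ∀ l, M l 0 = 0)
    (hinc : ∀ l, ∀ t, 1 ≤ t → ∀ᵐ ω ∂P, |M l t ω - M l (t - 1) ω| ≤ ρ t)
    (hV : ∀ t, V t = ∑ i ∈ Finset.Icc 1 t, (ρ i) ^ 2)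
    (hδ : δ ∈ Set.Ioo (0 : ℝ) 1)
    (ht₀ : IsLeast {u : ℕ | 1 ≤ u ∧ 173 * Real.log (4 * L / δ) ≤ V u} t₀) :
    (1 : ℝ≥0∞) - ENNReal.ofReal δ ≤
      P {ω | ∀ l, ∀ t, t₀ ≤ t →
        |M l t ω| <
          Real.sqrt (3 * V t * (2 * Real.log (Real.log (3 * V t)) + Real.log (2 * L / δ)))} := by
  obtain ⟨⟨-, hVt₀⟩, -⟩ := ht₀
  obtain ⟨hδ₀, hδ₁⟩ := hδ
  have hL₁ : 1 ≤ L := hL ▸ Nat.one_le_cast.2 Fintype.card_pos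
  set bad : Λ → Set Ω := fun l => {ω | ∃ t, V t₀ ≤ V t ∧ lilBound (2 * L / δ) (V t) ≤ |M l t ω|}
  have hbad : ∀ l, P (bad l) ≤ ENNReal.ofReal (δ / L) := fun l => by
    refine (measure_exists_lilBound_le_abs_le (hM l) (hM0 l)
      (fun t => by simpa using hinc l (t + 1) (by omega)) hV
      (exp_six_le_three_mul (by rw [le_div_iff₀ hδ₀]; nlinarith) hVt₀)
      (by rw [le_div_iff₀ hδ₀]; linarith)).trans_eq ?_
    congr 1; field_simp
  have hunion : P (⋃ l, bad l) ≤ ENNReal.ofReal δ := by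
    refine (measure_iUnion_fintype_le P bad).trans ((sum_le_sum fun l _ => hbad l).trans_eq ?_)
    rw [sum_const, card_univ, nsmul_eq_mul, ← ofReal_natCast, ← ofReal_mul (by positivity), ← hL,
      mul_div_cancel₀ _ (by positivity)]
  have hgood : (⋃ l, bad l)ᶜ ⊆ {ω | ∀ l, ∀ t, t₀ ≤ t → |M l t ω| < lilBound (2 * L / δ) (V t)} := by
    intro ω hω l t ht
    simp only [Set.mem_compl_iff, Set.mem_iUnion, not_exists, bad, Set.mem_ofPred_eq] at hω
    exact not_le.1 fun h => hω l t ⟨monotone_of_eq_sum_sq hV ht, h⟩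
  rw [tsub_le_iff_right]
  calc 1 = P Set.univ := measure_univ.symm
    _ ≤ P (⋃ l, bad l)ᶜ + P (⋃ l, bad l) := by
        rw [add_comm]; exact measure_univ_le_add_compl _
    _ ≤ _ := add_le_add (measure_mono hgood) hunion

/-- Finite LIL deviation bound, uniform over a finite grid `Λ` of thresholds
(union bound over the `L = |Λ|` martingales): with probability at least `1 - δ`,
simultaneously for all `λ ∈ Λ` and all `t ≥ t₀`,
`|M λ t| < sqrt(3 V t (2 log log (3 V t) + log (2L/δ)))`. -/
theorem stmt_4
    {Ω : Type*} [m : MeasurableSpace Ω] (P : Measure Ω) [IsProbabilityMeasure P]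
    {Λ : Type*} [Fintype Λ] [Nonempty Λ]
    (ℱ : Filtration ℕ m) (M : Λ → ℕ → Ω → ℝ) (ρ : ℕ → ℝ) (V : ℕ → ℝ) (δ : ℝ) (t₀ : ℕ)
    (L : ℝ) (hL : L = Fintype.card Λ)
    (hρ : ∀ t, 1 ≤ t → 0 < ρ t)
    (hM : ∀ l, Martingale (M l) ℱ P) (hM0 : ∀ l, M l 0 = 0)
    (hinc : ∀ l, ∀ t, 1 ≤ t → ∀ᵐ ω ∂P, |M l t ω - M l (t - 1) ω| ≤ ρ t)
    (hV : ∀ t, V t = ∑ i ∈ Finset.Icc 1 t, (ρ i) ^ 2)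
    (hδ : δ ∈ Set.Ioo (0 : ℝ) 1)
    (ht₀ : IsLeast {u : ℕ | 1 ≤ u ∧ 173 * Real.log (4 * L / δ) ≤ V u} t₀) :
    (1 : ℝ≥0∞) - ENNReal.ofReal δ ≤
      P {ω | ∀ l, ∀ t, t₀ ≤ t →
        |M l t ω| <
          Real.sqrt (3 * V t * (2 * Real.log (Real.log (3 * V t)) + Real.log (2 * L / δ)))} :=
  stmt_4_general (m := m) P ℱ M ρ V δ t₀ L hL hM hM0 hinc hV hδ ht₀
end

section
/- Setting: (Ω, 𝒜, P) is a probability space with filtration (F_n)_{n≥0}; p ∈ (0,1]; Λ is a finite nonempty index set with L = |Λ|; F : Λ → [0,1]; for each λ ∈ Λ, (Z_n(λ))_{n≥1} are random variables with Z_n(λ) F_n-measurable, 0 ≤ Z_n(λ) ≤ 1/p almost surely, and E[Z_n(λ) | F_{n−1}] = F(λ) almost surely for all n ≥ 1. Define F̂(λ, n) = (1/n) Σ_{u=1}^n Z_u(λ), c = 1/p², ψ(N, δ) = sqrt( (3c/N) ( 2 log log(3cN) + log(2L/δ) ) ), and n_0(δ) = min{u ≥ 1 : c·u ≥ 173 log(4L/δ)}.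 Then for every δ ∈ (0,1): P( ∃ n ≥ n_0(δ), ∃ λ ∈ Λ : |F̂(λ, n) − F(λ)| ≥ ψ(n, δ) ) ≤ δ. -/
/-!
Write `S n = ∑_{u ≤ n} (Z l u - F l) = n (F̂(l, n) - F l)`. The increments are martingale
differences with values in an interval of length `1/p`, so the conditional form of Hoeffding's
lemma makes `exp (s S n)` a submartingale with `E exp (s S n) ≤ exp (n s² c / 8)`, and Doob's
maximal inequality turns this into the maximal Azuma–Hoeffding bound
`P (∃ n ≤ N, t ≤ |S n|) ≤ 2 exp (-2 t² / (N c))`.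
Peeling `n ≥ n₀` into epochs `n₀ 2^k ≤ n ≤ n₀ 2^(k+1)` and using the boundary `n ψ(n, δ)` at the
start of the epoch, the failure probability for one grid point and one epoch is at most
`δ / (L (k+1)(k+2))`, because the choice of `n₀` makes `log (3 c n₀ 2^k) ≥ (k + 9) / 2`;
these sum to `δ`.
-/

open MeasureTheory ProbabilityTheory ENNReal

/-- Hoeffding's lemma for a Bernoulli(`q`) variable, whose moment generating function is the
left-hand side. -/
lemma one_add_mul_exp_sub_one_le {q : ℝ} (hq : q ∈ Set.Icc 0 1) (x : ℝ) :
    1 + q * (Real.exp x - 1) ≤ Real.exp (q * x + x ^ 2 / 8) := by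
  have hsupp : ∀ᵐ ω ∂bernoulliMeasure 1 0 ⟨q, hq⟩, ω ∈ Set.Icc (0 : ℝ) 1 :=
    ae_add_measure_iff.2 ⟨Measure.ae_smul_measure (by simp) _, Measure.ae_smul_measure (by simp) _⟩
  have hmgf := (hasSubgaussianMGF_of_mem_Icc aemeasurable_id hsupp).mgf_le x
  simp only [mgf, integral_bernoulliMeasure, id, smul_eq_mul] at hmgf
  norm_num at hmgf
  have e1 : Real.exp (q * x) * Real.exp (x * (1 - q)) = Real.exp x := by
    rw [← Real.exp_add]; ring_nf
  have e2 : Real.exp (q * x) * Real.exp (-(x * q)) = 1 := by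
    rw [← Real.exp_add]; ring_nf; exact Real.exp_zero
  calc 1 + q * (Real.exp x - 1)
      = Real.exp (q * x) * (q * Real.exp (x * (1 - q)) + (1 - q) * Real.exp (-(x * q))) := by
        linear_combination (-q) * e1 - (1 - q) * e2
    _ ≤ Real.exp (q * x) * Real.exp (1 / 4 * x ^ 2 / 2) := by gcongr
    _ = Real.exp (q * x + x ^ 2 / 8) := by rw [← Real.exp_add]; ring_nf

lemma exp_mul_le_one_add_mul_exp_sub_one {t : ℝ} (ht : t ∈ Set.Icc 0 1) (y : ℝ) :
    Real.exp (t * y) ≤ 1 + t * (Real.exp y - 1) := by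
  have := convexOn_exp.2 (Set.mem_univ 0) (Set.mem_univ y) (sub_nonneg.2 ht.2) ht.1 (by ring)
  simp only [smul_eq_mul, mul_zero, zero_add, Real.exp_zero, mul_one] at this
  linarith

lemma exists_mul_pow_two_le_le {n₀ n : ℕ} (hn₀ : 0 < n₀) (hn : n₀ ≤ n) :
    ∃ k, n₀ * 2 ^ k ≤ n ∧ n ≤ 2 * (n₀ * 2 ^ k) := by
  refine ⟨Nat.log 2 (n / n₀), ?_, ?_⟩
  · calc n₀ * 2 ^ Nat.log 2 (n / n₀) ≤ n₀ * (n / n₀) :=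
          Nat.mul_le_mul_left _ (Nat.pow_log_le_self 2 (Nat.div_pos hn hn₀).ne')
      _ ≤ n := Nat.mul_div_le n n₀
  · have := (Nat.div_lt_iff_lt_mul hn₀).1 (Nat.lt_pow_succ_log_self one_lt_two (n / n₀))
    rw [pow_succ] at this
    linarith

lemma hasSum_one_div_succ_mul_succ_succ :
    HasSum (fun k : ℕ => 1 / (((k : ℝ) + 1) * ((k : ℝ) + 2))) 1 := by
  have htel : ∀ k : ℕ,
      1 / (((k : ℝ) + 1) * ((k : ℝ) + 2)) = 1 / ((k : ℝ) + 1) - 1 / ((k + 1 : ℕ) + 1) := by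
    intro k; push_cast; field_simp; ring
  rw [hasSum_iff_tendsto_nat_of_nonneg (fun k => by positivity)]
  simp_rw [htel, Finset.sum_range_sub' (fun k : ℕ => 1 / ((k : ℝ) + 1))]
  simpa using (tendsto_one_div_add_atTop_nhds_zero_nat (𝕜 := ℝ)).const_sub 1

lemma add_nine_div_two_le_log_mul_pow_two {z : ℝ} (hz : 2 ^ 9 ≤ z) (k : ℕ) :
    ((k : ℝ) + 9) / 2 ≤ Real.log (z * 2 ^ k) := by
  have hlog2 : 1 / 2 < Real.log 2 := by linarith [Real.log_two_gt_d9]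
  calc ((k : ℝ) + 9) / 2 ≤ (k + 9 : ℕ) * Real.log 2 := by push_cast; nlinarith
    _ = Real.log (2 ^ 9 * 2 ^ k) := by rw [← pow_add, Real.log_pow, add_comm 9 k]
    _ ≤ Real.log (z * 2 ^ k) := Real.log_le_log (by positivity) (by gcongr)

lemma exp_neg_three_mul_le (k : ℕ) {y w : ℝ} (hy : ((k : ℝ) + 9) / 2 ≤ y) (hw : 0 ≤ w) :
    Real.exp (-3 * (2 * Real.log y + w)) ≤ Real.exp (-w) / (((k : ℝ) + 1) * ((k : ℝ) + 2)) := by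
  have hy0 : 0 < y := by linarith [(Nat.cast_nonneg k : (0 : ℝ) ≤ k)]
  have hpoly : ((k : ℝ) + 1) * ((k : ℝ) + 2) ≤ y ^ 6 := by
    have hk : (0 : ℝ) ≤ k := Nat.cast_nonneg k
    have hy4 : 4 ≤ y := by linarith
    nlinarith [pow_le_pow_left₀ (by norm_num) hy4 4, sq_nonneg y]
  calc Real.exp (-3 * (2 * Real.log y + w)) = Real.exp (-(2 * w)) * Real.exp (-w) / y ^ 6 := by
        rw [_root_.eq_div_iff (by positivity), ← Real.exp_add, ← Real.exp_log (pow_pos hy0 6),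
          ← Real.exp_add, Real.log_pow]
        ring_nf
    _ ≤ 1 * Real.exp (-w) / (((k : ℝ) + 1) * ((k : ℝ) + 2)) := by
        gcongr
        · exact Real.exp_le_one_iff.2 (by linarith)
    _ = Real.exp (-w) / (((k : ℝ) + 1) * ((k : ℝ) + 2)) := by rw [one_mul]

/-- With `w = log (2 L / δ)`, `lilBoundary c w x = (x ψ(x, δ))²`: the square of the boundary that
the partial sum `x (F̂ - F)` has to cross. -/
noncomputable def lilBoundary (c w x : ℝ) : ℝ :=
  3 * c * x * (2 * Real.log (Real.log (3 * c * x)) + w)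

lemma lilBoundary_nonneg {c w x : ℝ} (hc : 0 < c) (hw : 0 ≤ w) (hx0 : 0 < x)
    (hx : 1 ≤ Real.log (3 * c * x)) : 0 ≤ lilBoundary c w x :=
  mul_nonneg (by positivity) (by linarith [Real.log_nonneg hx])

lemma lilBoundary_mono {c w x y : ℝ} (hc : 0 < c) (hw : 0 ≤ w) (hx0 : 0 < x)
    (hx : 1 ≤ Real.log (3 * c * x)) (hxy : x ≤ y) : lilBoundary c w x ≤ lilBoundary c w y := by
  have hy0 : 0 < y := hx0.trans_le hxy
  have hcxy : 3 * c * x ≤ 3 * c * y := by gcongr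
  have hlog : Real.log (3 * c * x) ≤ Real.log (3 * c * y) := Real.log_le_log (by positivity) hcxy
  have hloglog : Real.log (Real.log (3 * c * x)) ≤ Real.log (Real.log (3 * c * y)) :=
    Real.log_le_log (by linarith) hlog
  have hQ : 0 ≤ 2 * Real.log (Real.log (3 * c * x)) + w := by
    have := Real.log_nonneg hx; linarith
  unfold lilBoundary
  exact mul_le_mul hcxy (by linarith) hQ (by positivity)

lemma sqrt_lilBoundary_le_mul {c w x y d : ℝ} (hc : 0 < c) (hw : 0 ≤ w) (hx0 : 0 < x)
    (hx : 1 ≤ Real.log (3 * c * x)) (hxy : x ≤ y)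
    (hd : Real.sqrt (3 * c / y * (2 * Real.log (Real.log (3 * c * y)) + w)) ≤ d) :
    Real.sqrt (lilBoundary c w x) ≤ y * d := by
  have hy0 : 0 < y := hx0.trans_le hxy
  calc Real.sqrt (lilBoundary c w x) ≤ Real.sqrt (lilBoundary c w y) :=
        Real.sqrt_le_sqrt (lilBoundary_mono hc hw hx0 hx hxy)
    _ = y * Real.sqrt (3 * c / y * (2 * Real.log (Real.log (3 * c * y)) + w)) := by
        rw [show lilBoundary c w y =
            y ^ 2 * (3 * c / y * (2 * Real.log (Real.log (3 * c * y)) + w)) by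
              unfold lilBoundary; field_simp,
          Real.sqrt_mul (sq_nonneg y), Real.sqrt_sq hy0.le]
    _ ≤ y * d := by gcongr

lemma measure_iUnion_iUnion_le_of_le {Ω ι : Type*} [MeasurableSpace Ω] [Fintype ι] [Nonempty ι]
    {μ : Measure Ω} {A : ℕ → ι → Set Ω} {ε : ℝ} (hε : 0 ≤ ε)
    (hA : ∀ k i, μ (A k i) ≤
      ENNReal.ofReal (ε / Fintype.card ι / (((k : ℝ) + 1) * ((k : ℝ) + 2)))) :
    μ (⋃ k, ⋃ i, A k i) ≤ ENNReal.ofReal ε := by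
  have hsum := hasSum_one_div_succ_mul_succ_succ.mul_left ε
  have hcard : (Fintype.card ι : ℝ) ≠ 0 := by positivity
  calc μ (⋃ k, ⋃ i, A k i) ≤ ∑' k, ∑ i, μ (A k i) :=
        (measure_iUnion_le _).trans (ENNReal.tsum_le_tsum fun k => measure_iUnion_fintype_le _ _)
    _ ≤ ∑' k : ℕ, ∑ _i : ι, ENNReal.ofReal (ε / Fintype.card ι / (((k : ℝ) + 1) * ((k : ℝ) + 2))) :=
        ENNReal.tsum_le_tsum fun k => Finset.sum_le_sum fun i _ => hA k i
    _ = ∑' k : ℕ, ENNReal.ofReal (ε * (1 / (((k : ℝ) + 1) * ((k : ℝ) + 2)))) := by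
        congr 1; ext k
        rw [Finset.sum_const, Finset.card_univ, nsmul_eq_mul, ← ENNReal.ofReal_natCast,
          ← ENNReal.ofReal_mul (by positivity)]
        congr 1; field_simp
    _ = ENNReal.ofReal ε := by
        rw [← ENNReal.ofReal_tsum_of_nonneg (fun k => by positivity) hsum.summable, hsum.tsum_eq,
          mul_one]

section CondExp

variable {Ω : Type*} {m m₀ : MeasurableSpace Ω} {μ : Measure[m₀] Ω} [IsProbabilityMeasure μ]
  {X : Ω → ℝ} {a b : ℝ}

lemma condExp_const_add_mul_ae_eq (hm : m ≤ m₀) (hX : Integrable X μ)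
    (hXa : μ[X|m] =ᵐ[μ] fun _ => a) (α β : ℝ) :
    μ[fun ω => α + β * X ω | m] =ᵐ[μ] fun _ => α + β * a := by
  have hsplit : (fun ω => α + β * X ω) = (fun _ => α) + β • X := rfl
  rw [hsplit]
  filter_upwards [condExp_add (integrable_const α) (hX.smul β) m, condExp_smul β X m, hXa]
    with ω h1 h2 h3
  simp [h1, h2, h3, condExp_const hm]

lemma mem_Icc_of_condExp_ae_eq (hm : m ≤ m₀) (hX : AEStronglyMeasurable X μ)
    (hXb : ∀ᵐ ω ∂μ, X ω ∈ Set.Icc 0 b) (hXa : μ[X|m] =ᵐ[μ] fun _ => a) : a ∈ Set.Icc 0 b := by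
  have hmean : ∫ ω, X ω ∂μ = a := by
    rw [← integral_condExp hm, integral_congr_ae hXa]; simp
  rw [← hmean]
  refine ⟨integral_nonneg_of_ae (hXb.mono fun _ h => h.1), ?_⟩
  calc ∫ ω, X ω ∂μ ≤ ∫ _, b ∂μ :=
        integral_mono_ae (Integrable.of_mem_Icc 0 b hX.aemeasurable hXb) (integrable_const b)
          (hXb.mono fun _ h => h.2)
    _ = b := by simp

lemma integrable_exp_mul_sub (hX : AEStronglyMeasurable X μ)
    (hXb : ∀ᵐ ω ∂μ, X ω ∈ Set.Icc 0 b) (s : ℝ) :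
    Integrable (fun ω => Real.exp (s * (X ω - a))) μ :=
  integrable_exp_mul_of_mem_Icc (hX.aemeasurable.sub_const a)
    (hXb.mono fun _ h => ⟨sub_le_sub_right h.1 a, sub_le_sub_right h.2 a⟩)

lemma condExp_exp_mul_sub_le (hm : m ≤ m₀) (hb : 0 < b) (hX : AEStronglyMeasurable X μ)
    (hXb : ∀ᵐ ω ∂μ, X ω ∈ Set.Icc 0 b) (hXa : μ[X|m] =ᵐ[μ] fun _ => a) (s : ℝ) :
    μ[fun ω => Real.exp (s * (X ω - a)) | m] ≤ᵐ[μ] fun _ => Real.exp (s ^ 2 * b ^ 2 / 8) := by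
  have hXint : Integrable X μ := Integrable.of_mem_Icc 0 b hX.aemeasurable hXb
  set β := Real.exp (-(s * a)) * ((Real.exp (s * b) - 1) / b)
  have hchord : (fun ω => Real.exp (s * (X ω - a))) ≤ᵐ[μ]
      fun ω => Real.exp (-(s * a)) + β * X ω := by
    filter_upwards [hXb] with ω hω
    have ht : X ω / b ∈ Set.Icc 0 1 := ⟨div_nonneg hω.1 hb.le, (div_le_one hb).2 hω.2⟩
    calc Real.exp (s * (X ω - a)) = Real.exp (-(s * a)) * Real.exp (X ω / b * (s * b)) := by
          rw [← Real.exp_add]; congr 1; field_simp; ring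
      _ ≤ Real.exp (-(s * a)) * (1 + X ω / b * (Real.exp (s * b) - 1)) := by
          gcongr; exact exp_mul_le_one_add_mul_exp_sub_one ht _
      _ = Real.exp (-(s * a)) + β * X ω := by simp only [β]; ring
  have hab := mem_Icc_of_condExp_ae_eq hm hX hXb hXa
  have hq : a / b ∈ Set.Icc 0 1 := ⟨div_nonneg hab.1 hb.le, (div_le_one hb).2 hab.2⟩
  filter_upwards [condExp_mono (integrable_exp_mul_sub hX hXb s)
    ((integrable_const _).add (hXint.const_mul β)) hchord,
    condExp_const_add_mul_ae_eq hm hXint hXa _ β] with ω h1 h2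
  calc μ[fun ω => Real.exp (s * (X ω - a)) | m] ω ≤ Real.exp (-(s * a)) + β * a := h1.trans h2.le
    _ = Real.exp (-(s * a)) * (1 + a / b * (Real.exp (s * b) - 1)) := by simp only [β]; ring
    _ ≤ Real.exp (-(s * a)) * Real.exp (a / b * (s * b) + (s * b) ^ 2 / 8) := by
        gcongr; exact one_add_mul_exp_sub_one_le hq _
    _ = Real.exp (s ^ 2 * b ^ 2 / 8) := by rw [← Real.exp_add]; congr 1; field_simp; ring

lemma one_le_condExp_exp_mul_sub (hm : m ≤ m₀) (hX : AEStronglyMeasurable X μ)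
    (hXb : ∀ᵐ ω ∂μ, X ω ∈ Set.Icc 0 b) (hXa : μ[X|m] =ᵐ[μ] fun _ => a) (s : ℝ) :
    (fun _ => (1 : ℝ)) ≤ᵐ[μ] μ[fun ω => Real.exp (s * (X ω - a)) | m] := by
  have hXint : Integrable X μ := Integrable.of_mem_Icc 0 b hX.aemeasurable hXb
  have htangent : (fun ω => (1 - s * a) + s * X ω) ≤ᵐ[μ] fun ω => Real.exp (s * (X ω - a)) :=
    ae_of_all _ fun ω => by linarith [Real.add_one_le_exp (s * (X ω - a))]
  filter_upwards [condExp_mono (m := m) ((integrable_const _).add (hXint.const_mul s))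
    (integrable_exp_mul_sub hX hXb s) htangent,
    condExp_const_add_mul_ae_eq hm hXint hXa (1 - s * a) s] with ω h1 h2
  exact (show (1 : ℝ) = 1 - s * a + s * a by ring).trans_le (h2.symm.trans_le h1)

end CondExp

section CenteredSum

variable {Ω : Type*} {m₀ : MeasurableSpace Ω}

structure IsBoundedWithCondMean (μ : Measure Ω) (ℱ : Filtration ℕ m₀) (Z : ℕ → Ω → ℝ)
    (a b : ℝ) : Prop where
  stronglyMeasurable : ∀ n, 1 ≤ n → StronglyMeasurable[ℱ n] (Z n)
  mem_Icc : ∀ n, 1 ≤ n → ∀ᵐ ω ∂μ, Z n ω ∈ Set.Icc 0 b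
  condExp_ae_eq : ∀ n, 1 ≤ n → μ[Z n | ℱ (n - 1)] =ᵐ[μ] fun _ => a

def centeredSum (Z : ℕ → Ω → ℝ) (a : ℝ) (n : ℕ) (ω : Ω) : ℝ :=
  ∑ u ∈ Finset.Icc 1 n, (Z u ω - a)

variable {μ : Measure Ω} {ℱ : Filtration ℕ m₀} {Z : ℕ → Ω → ℝ} {a b : ℝ}

lemma centeredSum_zero : centeredSum Z a 0 = 0 := by
  ext ω; simp [centeredSum]

lemma centeredSum_succ (n : ℕ) (ω : Ω) :
    centeredSum Z a (n + 1) ω = centeredSum Z a n ω + (Z (n + 1) ω - a) :=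
  Finset.sum_Icc_succ_top (Nat.le_add_left 1 n) _

lemma centeredSum_eq_mul_average_sub (n : ℕ) (ω : Ω) :
    centeredSum Z a n ω = n * ((1 / (n : ℝ)) * ∑ u ∈ Finset.Icc 1 n, Z u ω - a) := by
  rcases Nat.eq_zero_or_pos n with rfl | hn
  · simp [centeredSum]
  · have : (n : ℝ) ≠ 0 := by positivity
    simp only [centeredSum, Finset.sum_sub_distrib, Finset.sum_const, Nat.card_Icc,
      Nat.add_sub_cancel, nsmul_eq_mul]
    field_simp

lemma exists_sqrt_lilBoundary_le_abs_centeredSum {c w : ℝ} (hc : 0 < c) (hw : 0 ≤ w)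
    {n₀ n : ℕ} (hn₀ : 0 < n₀) (hlog : 1 ≤ Real.log (3 * c * n₀)) (hn : n₀ ≤ n) {ω : Ω}
    (hdev : Real.sqrt (3 * c / n * (2 * Real.log (Real.log (3 * c * n)) + w)) ≤
      |1 / (n : ℝ) * ∑ u ∈ Finset.Icc 1 n, Z u ω - a|) :
    ∃ k, n ≤ 2 * (n₀ * 2 ^ k) ∧
      Real.sqrt (lilBoundary c w (n₀ * 2 ^ k : ℕ)) ≤ |centeredSum Z a n ω| := by
  obtain ⟨k, hkn, hnk⟩ := exists_mul_pow_two_le_le hn₀ hn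
  have hn₀k : (n₀ : ℝ) ≤ (n₀ * 2 ^ k : ℕ) := by
    exact_mod_cast Nat.le_mul_of_pos_right n₀ (by positivity)
  have hlogk : 1 ≤ Real.log (3 * c * (n₀ * 2 ^ k : ℕ)) :=
    hlog.trans (Real.log_le_log (by positivity) (by gcongr))
  refine ⟨k, hnk, ?_⟩
  rw [centeredSum_eq_mul_average_sub, abs_mul, Nat.abs_cast]
  exact sqrt_lilBoundary_le_mul hc hw (by positivity) hlogk (by exact_mod_cast hkn) hdev

namespace IsBoundedWithCondMean

lemma stronglyMeasurable_centeredSum (hZ : IsBoundedWithCondMean μ ℱ Z a b) (n : ℕ) :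
    StronglyMeasurable[ℱ n] (centeredSum Z a n) := by
  unfold centeredSum
  refine Finset.stronglyMeasurable_fun_sum _ fun u hu => ?_
  obtain ⟨hu1, hun⟩ := Finset.mem_Icc.1 hu
  exact ((hZ.stronglyMeasurable u hu1).mono (ℱ.mono hun)).sub stronglyMeasurable_const

lemma mem_Icc_centeredSum (hZ : IsBoundedWithCondMean μ ℱ Z a b) (n : ℕ) :
    ∀ᵐ ω ∂μ, centeredSum Z a n ω ∈ Set.Icc (n * -a) (n * (b - a)) := by
  have hall : ∀ᵐ ω ∂μ, ∀ u ∈ Finset.Icc 1 n, Z u ω ∈ Set.Icc 0 b :=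
    (Finset.eventually_all _).2 fun u hu => hZ.mem_Icc u (Finset.mem_Icc.1 hu).1
  filter_upwards [hall] with ω hω
  constructor
  · calc (n : ℝ) * -a = ∑ _u ∈ Finset.Icc 1 n, (0 - a) := by simp
      _ ≤ centeredSum Z a n ω :=
          Finset.sum_le_sum fun u hu => sub_le_sub_right (hω u hu).1 a
  · calc centeredSum Z a n ω ≤ ∑ _u ∈ Finset.Icc 1 n, (b - a) :=
          Finset.sum_le_sum fun u hu => sub_le_sub_right (hω u hu).2 a
      _ = n * (b - a) := by simp; ring

lemma integrable_exp_mul_centeredSum [IsProbabilityMeasure μ]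
    (hZ : IsBoundedWithCondMean μ ℱ Z a b) (s : ℝ) (n : ℕ) :
    Integrable (fun ω => Real.exp (s * centeredSum Z a n ω)) μ :=
  integrable_exp_mul_of_mem_Icc
    ((hZ.stronglyMeasurable_centeredSum n).mono (ℱ.le n)).aestronglyMeasurable.aemeasurable
    (hZ.mem_Icc_centeredSum n)

lemma aestronglyMeasurable_succ (hZ : IsBoundedWithCondMean μ ℱ Z a b) (i : ℕ) :
    AEStronglyMeasurable (Z (i + 1)) μ :=
  ((hZ.stronglyMeasurable (i + 1) (Nat.le_add_left 1 i)).mono (ℱ.le _)).aestronglyMeasurable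

lemma condExp_succ_ae_eq (hZ : IsBoundedWithCondMean μ ℱ Z a b) (i : ℕ) :
    μ[Z (i + 1) | ℱ i] =ᵐ[μ] fun _ => a := by
  simpa using hZ.condExp_ae_eq (i + 1) (Nat.le_add_left 1 i)

lemma condExp_exp_mul_centeredSum_succ [IsProbabilityMeasure μ]
    (hZ : IsBoundedWithCondMean μ ℱ Z a b) (s : ℝ) (i : ℕ) :
    μ[fun ω => Real.exp (s * centeredSum Z a (i + 1) ω) | ℱ i] =ᵐ[μ]
      fun ω => Real.exp (s * centeredSum Z a i ω) *
        μ[fun ω => Real.exp (s * (Z (i + 1) ω - a)) | ℱ i] ω := by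
  have hprod : (fun ω => Real.exp (s * centeredSum Z a (i + 1) ω)) =
      (fun ω => Real.exp (s * centeredSum Z a i ω)) *
        fun ω => Real.exp (s * (Z (i + 1) ω - a)) := by
    ext ω; simp only [Pi.mul_apply, centeredSum_succ, mul_add, Real.exp_add]
  rw [hprod]
  refine condExp_mul_of_stronglyMeasurable_left
    (Real.continuous_exp.comp_stronglyMeasurable
      ((hZ.stronglyMeasurable_centeredSum i).const_mul s)) ?_
    (integrable_exp_mul_sub (hZ.aestronglyMeasurable_succ i) (hZ.mem_Icc _ (by omega)) s)
  rw [← hprod]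
  exact hZ.integrable_exp_mul_centeredSum s (i + 1)

lemma submartingale_exp_mul_centeredSum [IsProbabilityMeasure μ]
    (hZ : IsBoundedWithCondMean μ ℱ Z a b) (s : ℝ) :
    Submartingale (fun n ω => Real.exp (s * centeredSum Z a n ω)) ℱ μ := by
  refine submartingale_nat (fun n => Real.continuous_exp.comp_stronglyMeasurable
      ((hZ.stronglyMeasurable_centeredSum n).const_mul s))
    (hZ.integrable_exp_mul_centeredSum s) fun i => ?_
  filter_upwards [hZ.condExp_exp_mul_centeredSum_succ s i,
    one_le_condExp_exp_mul_sub (ℱ.le i) (hZ.aestronglyMeasurable_succ i)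
      (hZ.mem_Icc _ (by omega)) (hZ.condExp_succ_ae_eq i) s] with ω h1 h2
  rw [h1]
  exact le_mul_of_one_le_right (Real.exp_pos _).le h2

lemma integral_exp_mul_centeredSum_le [IsProbabilityMeasure μ]
    (hZ : IsBoundedWithCondMean μ ℱ Z a b) (hb : 0 < b)
    (s : ℝ) (n : ℕ) :
    ∫ ω, Real.exp (s * centeredSum Z a n ω) ∂μ ≤ Real.exp (n * (s ^ 2 * b ^ 2 / 8)) := by
  induction n with
  | zero => simp [centeredSum_zero]
  | succ n ih =>
    calc ∫ ω, Real.exp (s * centeredSum Z a (n + 1) ω) ∂μ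
        = ∫ ω, Real.exp (s * centeredSum Z a n ω) *
            μ[fun ω => Real.exp (s * (Z (n + 1) ω - a)) | ℱ n] ω ∂μ := by
          rw [← integral_condExp (ℱ.le n)]
          exact integral_congr_ae (hZ.condExp_exp_mul_centeredSum_succ s n)
      _ ≤ ∫ ω, Real.exp (s * centeredSum Z a n ω) * Real.exp (s ^ 2 * b ^ 2 / 8) ∂μ := by
          refine integral_mono_ae (integrable_condExp.congr
            (hZ.condExp_exp_mul_centeredSum_succ s n))
            ((hZ.integrable_exp_mul_centeredSum s n).mul_const _) ?_
          filter_upwards [condExp_exp_mul_sub_le (ℱ.le n) hb (hZ.aestronglyMeasurable_succ n)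
            (hZ.mem_Icc _ (by omega)) (hZ.condExp_succ_ae_eq n) s] with ω hω
          exact mul_le_mul_of_nonneg_left hω (Real.exp_pos _).le
      _ ≤ Real.exp (n * (s ^ 2 * b ^ 2 / 8)) * Real.exp (s ^ 2 * b ^ 2 / 8) := by
          rw [integral_mul_const]; gcongr
      _ = Real.exp ((n + 1 : ℕ) * (s ^ 2 * b ^ 2 / 8)) := by
          rw [← Real.exp_add]; push_cast; ring_nf

lemma measure_exists_le_mul_centeredSum_le [IsProbabilityMeasure μ]
    (hZ : IsBoundedWithCondMean μ ℱ Z a b) (hb : 0 < b)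
    (s r : ℝ) (N : ℕ) :
    μ {ω | ∃ n ≤ N, r ≤ s * centeredSum Z a n ω} ≤
      ENNReal.ofReal (Real.exp (N * (s ^ 2 * b ^ 2 / 8) - r)) := by
  set g : ℕ → Ω → ℝ := fun n ω => Real.exp (s * centeredSum Z a n ω)
  set ε : NNReal := (Real.exp r).toNNReal
  set A := {ω | (ε : ℝ) ≤ (Finset.range (N + 1)).sup' Finset.nonempty_range_add_one fun k => g k ω}
  have hsub : {ω | ∃ n ≤ N, r ≤ s * centeredSum Z a n ω} ⊆ A := by
    rintro ω ⟨n, hnN, hrn⟩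
    change (ε : ℝ) ≤ _
    rw [Real.coe_toNNReal _ (Real.exp_pos r).le]
    exact (Real.exp_le_exp.2 hrn).trans
      (Finset.le_sup' (fun k => g k ω) (Finset.mem_range.2 (Nat.lt_succ_of_le hnN)))
  have hdoob : ε * μ A ≤ ENNReal.ofReal (Real.exp (N * (s ^ 2 * b ^ 2 / 8))) :=
    (maximal_ineq (hZ.submartingale_exp_mul_centeredSum s) (fun _ _ => (Real.exp_pos _).le) N).trans
      (ENNReal.ofReal_le_ofReal ((setIntegral_le_integral (hZ.integrable_exp_mul_centeredSum s N)
        (ae_of_all _ fun _ => (Real.exp_pos _).le)).trans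
          (hZ.integral_exp_mul_centeredSum_le hb s N)))
  have hε : (ε : ℝ≥0∞) = ENNReal.ofReal (Real.exp r) := rfl
  calc μ {ω | ∃ n ≤ N, r ≤ s * centeredSum Z a n ω} ≤ μ A := measure_mono hsub
    _ ≤ ENNReal.ofReal (Real.exp (N * (s ^ 2 * b ^ 2 / 8))) / ε := by
        rw [ENNReal.le_div_iff_mul_le (Or.inl (by simp [ε, Real.exp_pos]))
          (Or.inl ENNReal.coe_ne_top), mul_comm]
        exact hdoob
    _ = ENNReal.ofReal (Real.exp (N * (s ^ 2 * b ^ 2 / 8) - r)) := by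
        rw [hε, ← ENNReal.ofReal_div_of_pos (Real.exp_pos r), Real.exp_sub]

lemma measure_exists_le_abs_centeredSum_le [IsProbabilityMeasure μ]
    (hZ : IsBoundedWithCondMean μ ℱ Z a b) (hb : 0 < b)
    {N : ℕ} (hN : 0 < N) {t : ℝ} (ht : 0 ≤ t) :
    μ {ω | ∃ n ≤ N, t ≤ |centeredSum Z a n ω|} ≤
      ENNReal.ofReal (2 * Real.exp (-2 * t ^ 2 / (N * b ^ 2))) := by
  -- the `s` minimising `N s² b² / 8 - s t`
  set s := 4 * t / (N * b ^ 2)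
  have hs : 0 ≤ s := by positivity
  have hexp : N * (s ^ 2 * b ^ 2 / 8) - s * t = -2 * t ^ 2 / (N * b ^ 2) := by
    have : (N : ℝ) ≠ 0 := by positivity
    simp only [s]; field_simp; ring
  have hsplit : {ω | ∃ n ≤ N, t ≤ |centeredSum Z a n ω|} ⊆
      {ω | ∃ n ≤ N, s * t ≤ s * centeredSum Z a n ω} ∪
        {ω | ∃ n ≤ N, s * t ≤ -s * centeredSum Z a n ω} := by
    rintro ω ⟨n, hnN, htn⟩
    rcases le_abs'.1 htn with hneg | hpos
    · exact Or.inr ⟨n, hnN, by nlinarith⟩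
    · exact Or.inl ⟨n, hnN, mul_le_mul_of_nonneg_left hpos hs⟩
  calc μ {ω | ∃ n ≤ N, t ≤ |centeredSum Z a n ω|}
      ≤ ENNReal.ofReal (Real.exp (N * (s ^ 2 * b ^ 2 / 8) - s * t)) +
        ENNReal.ofReal (Real.exp (N * ((-s) ^ 2 * b ^ 2 / 8) - s * t)) :=
        (measure_mono hsplit).trans ((measure_union_le _ _).trans (add_le_add
          (hZ.measure_exists_le_mul_centeredSum_le hb s _ N)
          (hZ.measure_exists_le_mul_centeredSum_le hb (-s) _ N)))
    _ = ENNReal.ofReal (2 * Real.exp (-2 * t ^ 2 / (N * b ^ 2))) := by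
        rw [neg_sq, hexp, ← ENNReal.ofReal_add (Real.exp_pos _).le (Real.exp_pos _).le, two_mul]

lemma measure_exists_le_sqrt_lilBoundary_le [IsProbabilityMeasure μ]
    (hZ : IsBoundedWithCondMean μ ℱ Z a b) (hb : 0 < b)
    {c w : ℝ} (hcb : c = b ^ 2) (hw : 0 ≤ w) {N : ℕ} (hN : 0 < N) (k : ℕ)
    (hlog : ((k : ℝ) + 9) / 2 ≤ Real.log (3 * c * N)) :
    μ {ω | ∃ n ≤ 2 * N, Real.sqrt (lilBoundary c w N) ≤ |centeredSum Z a n ω|} ≤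
      ENNReal.ofReal (2 * Real.exp (-w) / (((k : ℝ) + 1) * ((k : ℝ) + 2))) := by
  have hc : 0 < c := by rw [hcb]; positivity
  have hN0 : (0 : ℝ) < N := by exact_mod_cast hN
  have hexp : -2 * Real.sqrt (lilBoundary c w N) ^ 2 / ((2 * N : ℕ) * b ^ 2) =
      -3 * (2 * Real.log (Real.log (3 * c * N)) + w) := by
    have hlog1 : 1 ≤ Real.log (3 * c * N) := by linarith [(Nat.cast_nonneg k : (0 : ℝ) ≤ k)]
    rw [Real.sq_sqrt (lilBoundary_nonneg hc hw hN0 hlog1), ← hcb, lilBoundary]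
    push_cast; field_simp
  refine (hZ.measure_exists_le_abs_centeredSum_le hb (by positivity) (Real.sqrt_nonneg _)).trans
    (ENNReal.ofReal_le_ofReal ?_)
  rw [hexp, mul_div_assoc]
  gcongr
  exact exp_neg_three_mul_le k hlog hw

end IsBoundedWithCondMean

end CenteredSum

theorem stmt_5_general
    {Ω : Type*} [m : MeasurableSpace Ω] (P : Measure Ω) [IsProbabilityMeasure P]
    {Λ : Type*} [Fintype Λ] [Nonempty Λ]
    (ℱ : Filtration ℕ m) (p : ℝ) (hp : p ∈ Set.Ioc (0 : ℝ) 1)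
    (L : ℝ) (hL : L = Fintype.card Λ)
    (F : Λ → ℝ)
    (Z : Λ → ℕ → Ω → ℝ)
    (hmeas : ∀ l, ∀ n, 1 ≤ n → StronglyMeasurable[ℱ n] (Z l n))
    (hbdd : ∀ l, ∀ n, 1 ≤ n → ∀ᵐ ω ∂P, 0 ≤ Z l n ω ∧ Z l n ω ≤ 1 / p)
    (hcond : ∀ l, ∀ n, 1 ≤ n → P[Z l n | ℱ (n - 1)] =ᵐ[P] fun _ => F l)
    (Fhat : Λ → ℕ → Ω → ℝ)
    (hFhat : ∀ l n, Fhat l n = fun ω => (1 / (n : ℝ)) * ∑ u ∈ Finset.Icc 1 n, Z l u ω)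
    (c : ℝ) (hc : c = 1 / p ^ 2)
    (ψ : ℝ → ℝ → ℝ)
    (hψ : ∀ N δ, ψ N δ =
      Real.sqrt ((3 * c / N) * (2 * Real.log (Real.log (3 * c * N)) + Real.log (2 * L / δ))))
    (δ : ℝ) (hδ : δ ∈ Set.Ioo (0 : ℝ) 1)
    (n₀ : ℕ) (hn₀ : IsLeast {u : ℕ | 1 ≤ u ∧ 173 * Real.log (4 * L / δ) ≤ c * u} n₀) :
    P {ω | ∃ n, n₀ ≤ n ∧ ∃ l, ψ n δ ≤ |Fhat l n ω - F l|} ≤ ENNReal.ofReal δ := by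
  obtain ⟨hδ0, hδ1⟩ := hδ
  obtain ⟨hn₀1, hn₀c⟩ := hn₀.1
  have hL1 : 1 ≤ L := by rw [hL]; exact_mod_cast Fintype.card_pos
  have hb : 0 < 1 / p := one_div_pos.2 hp.1
  have hcb : c = (1 / p) ^ 2 := by rw [hc, one_div_pow]
  have hc0 : 0 < c := by rw [hcb]; positivity
  have hw : 0 ≤ Real.log (2 * L / δ) := Real.log_nonneg (by rw [le_div_iff₀ hδ0]; linarith)
  have hew : Real.exp (-Real.log (2 * L / δ)) = δ / (2 * L) := by
    rw [Real.exp_neg, Real.exp_log (by positivity), inv_div]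
  have h512 : (2 : ℝ) ^ 9 ≤ 3 * c * n₀ := by
    have : 1 ≤ Real.log (4 * L / δ) := by
      rw [Real.le_log_iff_exp_le (by positivity), le_div_iff₀ hδ0]
      nlinarith [Real.exp_one_lt_d9]
    nlinarith
  have hlog : ∀ k : ℕ, ((k : ℝ) + 9) / 2 ≤ Real.log (3 * c * (n₀ * 2 ^ k : ℕ)) := fun k => by
    simpa [mul_assoc] using add_nine_div_two_le_log_mul_pow_two h512 k
  have hincl : {ω | ∃ n, n₀ ≤ n ∧ ∃ l, ψ n δ ≤ |Fhat l n ω - F l|} ⊆ ⋃ k, ⋃ l,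
      {ω | ∃ n ≤ 2 * (n₀ * 2 ^ k), Real.sqrt (lilBoundary c (Real.log (2 * L / δ)) (n₀ * 2 ^ k : ℕ))
        ≤ |centeredSum (Z l) (F l) n ω|} := by
    rintro ω ⟨n, hn, l, hdev⟩
    rw [hψ, hFhat] at hdev
    obtain ⟨k, hk⟩ := exists_sqrt_lilBoundary_le_abs_centeredSum hc0 hw hn₀1
      (by simpa using (hlog 0).trans' (by norm_num)) hn hdev
    exact Set.mem_iUnion₂.2 ⟨k, l, n, hk⟩
  refine (measure_mono hincl).trans (measure_iUnion_iUnion_le_of_le hδ0.le fun k l => ?_)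
  have hZ : IsBoundedWithCondMean P ℱ (Z l) (F l) (1 / p) := ⟨hmeas l, hbdd l, hcond l⟩
  refine (hZ.measure_exists_le_sqrt_lilBoundary_le hb hcb hw (by positivity) k (hlog k)).trans_eq ?_
  rw [hew, ← hL]
  congr 1; field_simp

/-- Anytime-valid LIL confidence interval on the false positive rate: for the
the importance-sampled indicators `Z l n ∈ [0, 1/p]` with conditional mean `F l`,
the empirical mean `F̂(l, n) = (1/n) ∑_{u=1}^n Z l u` deviates from `F l` by at
least the LIL radius `ψ(n, δ)` for some `n ≥ n₀(δ)` and some grid point `l ∈ Λ`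
with probability at most `δ`. -/
theorem stmt_5
    {Ω : Type*} [m : MeasurableSpace Ω] (P : Measure Ω) [IsProbabilityMeasure P]
    {Λ : Type*} [Fintype Λ] [Nonempty Λ]
    (ℱ : Filtration ℕ m) (p : ℝ) (hp : p ∈ Set.Ioc (0 : ℝ) 1)
    (L : ℝ) (hL : L = Fintype.card Λ)
    (F : Λ → ℝ) (hF : ∀ l, F l ∈ Set.Icc (0 : ℝ) 1)
    (Z : Λ → ℕ → Ω → ℝ)
    (hmeas : ∀ l, ∀ n, 1 ≤ n → StronglyMeasurable[ℱ n] (Z l n))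
    (hbdd : ∀ l, ∀ n, 1 ≤ n → ∀ᵐ ω ∂P, 0 ≤ Z l n ω ∧ Z l n ω ≤ 1 / p)
    (hcond : ∀ l, ∀ n, 1 ≤ n → P[Z l n | ℱ (n - 1)] =ᵐ[P] fun _ => F l)
    (Fhat : Λ → ℕ → Ω → ℝ)
    (hFhat : ∀ l n, Fhat l n = fun ω => (1 / (n : ℝ)) * ∑ u ∈ Finset.Icc 1 n, Z l u ω)
    (c : ℝ) (hc : c = 1 / p ^ 2)
    (ψ : ℝ → ℝ → ℝ)
    (hψ : ∀ N δ, ψ N δ =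
      Real.sqrt ((3 * c / N) * (2 * Real.log (Real.log (3 * c * N)) + Real.log (2 * L / δ))))
    (δ : ℝ) (hδ : δ ∈ Set.Ioo (0 : ℝ) 1)
    (n₀ : ℕ) (hn₀ : IsLeast {u : ℕ | 1 ≤ u ∧ 173 * Real.log (4 * L / δ) ≤ c * u} n₀) :
    P {ω | ∃ n, n₀ ≤ n ∧ ∃ l, ψ n δ ≤ |Fhat l n ω - F l|} ≤ ENNReal.ofReal δ :=
  stmt_5_general (m := m) P ℱ p hp L hL F Z hmeas hbdd hcond Fhat hFhat c hc ψ hψ δ hδ n₀ hn₀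
end

section
/- Setting: (Ω, 𝒜, P) is a probability space with filtration (F_n)_{n≥0}; p ∈ (0,1]; Λ is a finite nonempty index set with L = |Λ|; F : Λ → [0,1]; for each λ ∈ Λ, (Z_n(λ))_{n≥1} are random variables with Z_n(λ) F_n-measurable, 0 ≤ Z_n(λ) ≤ 1/p almost surely, and E[Z_n(λ) | F_{n−1}] = F(λ) almost surely for all n ≥ 1. Define F̂(λ, n) = (1/n) Σ_{u=1}^n Z_u(λ), c = 1/p², ψ(N, δ) = sqrt( (3c/N) ( 2 log log(3cN) + log(2L/δ) ) ), and n_0(δ) = min{u ≥ 1 : c·u ≥ 173 log(4L/δ)}. Suppose λ* ∈ Λ satisfies F(λ*) = α for some α ∈ (0,1), and let η ∈ (0,1). Then for every δ ∈ (0,1), with probability at least 1 − δ the following holds simultaneously for all n ≥ n_0(δ) with ψ(n, δ) ≤ η/2 and all λ̂ ∈ Λ: if F̂(λ̂, n) ≥ α − η/2, then F(λ*) − F(λ̂) ≤ η. -/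
open MeasureTheory ProbabilityTheory ENNReal

/-!
Fix `t = η / (2c)`. For each threshold `l`, the conditional Hoeffding lemma makes
`exp (t Σᵤ (Z_u(l) - F(l)) - n t² c / 2)` a nonnegative supermartingale started at `1`, so by
Ville's inequality it ever reaches `2L/δ` with probability at most `δ/(2L)`. Off the union of
these `L` events, `ψ(n, δ) ≤ η/2` forces `12 c log (2L/δ) ≤ η² n`, which bounds
`F̂(l, n) - F(l)` by `5η/12 < η/2`; together with `F̂(l, n) ≥ α - η/2` this gives
`α - F(l) ≤ η`.
-/

theorem Real.exp_mul_le_cosh_add_sinh_div_mul {x B : ℝ} (t : ℝ) (hB : 0 < B) (hx : |x| ≤ B) :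
    Real.exp (t * x) ≤ Real.cosh (t * B) + Real.sinh (t * B) / B * x := by
  obtain ⟨hx1, hx2⟩ := abs_le.1 hx
  have key := convexOn_exp.2 (Set.mem_univ (t * B)) (Set.mem_univ (-(t * B)))
    (show (0:ℝ) ≤ (x + B) / (2 * B) from div_nonneg (by linarith) (by linarith))
    (show (0:ℝ) ≤ (B - x) / (2 * B) from div_nonneg (by linarith) (by linarith))
    (show (x + B) / (2 * B) + (B - x) / (2 * B) = 1 by field_simp; ring)
  have harg : (x + B) / (2 * B) * (t * B) + (B - x) / (2 * B) * (-(t * B)) = t * x := by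
    field_simp; ring
  simp only [smul_eq_mul, harg] at key
  refine key.trans_eq ?_
  rw [Real.cosh_eq, Real.sinh_eq]
  field_simp
  ring

section

variable {Ω : Type*} {m m0 : MeasurableSpace Ω} {μ : Measure Ω}

theorem condExp_exp_mul_le_of_abs_le [IsFiniteMeasure μ] (hm : m ≤ m0) {X : Ω → ℝ} {B : ℝ}
    (hB : 0 < B) (hXm : AEStronglyMeasurable X μ) (hXB : ∀ᵐ ω ∂μ, |X ω| ≤ B)
    (hX0 : μ[X | m] =ᵐ[μ] 0) (t : ℝ) :
    μ[fun ω => Real.exp (t * X ω) | m] ≤ᵐ[μ] fun _ => Real.exp (t ^ 2 * B ^ 2 / 2) := by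
  have hXIcc : ∀ᵐ ω ∂μ, X ω ∈ Set.Icc (-B) B := by
    filter_upwards [hXB] with ω h using abs_le.1 h
  have hXint : Integrable X μ := Integrable.of_mem_Icc (-B) B hXm.aemeasurable hXIcc
  have hmajor : μ[fun ω => Real.exp (t * X ω) | m]
      ≤ᵐ[μ] μ[(fun _ => Real.cosh (t * B)) + (Real.sinh (t * B) / B) • X | m] :=
    condExp_mono (integrable_exp_mul_of_mem_Icc hXm.aemeasurable hXIcc)
      ((integrable_const _).add (hXint.smul (Real.sinh (t * B) / B)))
      (by filter_upwards [hXB] with ω h using Real.exp_mul_le_cosh_add_sinh_div_mul t hB h)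
  have haffine : μ[(fun _ => Real.cosh (t * B)) + (Real.sinh (t * B) / B) • X | m]
      =ᵐ[μ] fun _ => Real.cosh (t * B) := by
    filter_upwards [condExp_add (integrable_const (Real.cosh (t * B)))
        (hXint.smul (Real.sinh (t * B) / B)) m,
      condExp_smul (μ := μ) (m := m) (Real.sinh (t * B) / B) X, hX0] with ω hadd hsmul h0
    rw [hadd, Pi.add_apply, hsmul, Pi.smul_apply, h0, condExp_const hm]
    simp
  filter_upwards [hmajor, haffine] with ω h1 h2
  calc _ ≤ Real.cosh (t * B) := h1.trans h2.le
    _ ≤ Real.exp ((t * B) ^ 2 / 2) := Real.cosh_le_exp_half_sq _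
    _ = Real.exp (t ^ 2 * B ^ 2 / 2) := by rw [mul_pow]

theorem condExp_exp_mul_sub_le_one [IsFiniteMeasure μ] (hm : m ≤ m0) {X : Ω → ℝ} {B : ℝ}
    (hB : 0 < B) (hXm : AEStronglyMeasurable X μ) (hXB : ∀ᵐ ω ∂μ, |X ω| ≤ B)
    (hX0 : μ[X | m] =ᵐ[μ] 0) (t : ℝ) :
    μ[fun ω => Real.exp (t * X ω - t ^ 2 * B ^ 2 / 2) | m] ≤ᵐ[μ] 1 := by
  have hfactor : (fun ω => Real.exp (t * X ω - t ^ 2 * B ^ 2 / 2))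
      = Real.exp (-(t ^ 2 * B ^ 2 / 2)) • fun ω => Real.exp (t * X ω) := by
    funext ω
    simp only [Pi.smul_apply, smul_eq_mul, ← Real.exp_add]
    ring_nf
  rw [hfactor]
  filter_upwards [condExp_smul (μ := μ) (m := m) (Real.exp (-(t ^ 2 * B ^ 2 / 2)))
    (fun ω => Real.exp (t * X ω)), condExp_exp_mul_le_of_abs_le hm hB hXm hXB hX0 t]
    with ω hsmul h
  rw [hsmul, Pi.smul_apply, smul_eq_mul, Pi.one_apply]
  refine (mul_le_mul_of_nonneg_left h (Real.exp_pos _).le).trans_eq ?_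
  rw [← Real.exp_add, neg_add_cancel, Real.exp_zero]

variable {ℱ : Filtration ℕ m0}

theorem supermartingale_exp_mul_sum_sub [IsFiniteMeasure μ] {X : ℕ → Ω → ℝ} {B : ℝ}
    (hB : 0 < B) (hXm : ∀ n, 1 ≤ n → StronglyMeasurable[ℱ n] (X n))
    (hXB : ∀ n, 1 ≤ n → ∀ᵐ ω ∂μ, |X n ω| ≤ B)
    (hX0 : ∀ n, 1 ≤ n → μ[X n | ℱ (n - 1)] =ᵐ[μ] 0) (t : ℝ) :
    Supermartingale
      (fun n ω => Real.exp (t * ∑ u ∈ Finset.Icc 1 n, X u ω - n * (t ^ 2 * B ^ 2 / 2)))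
      ℱ μ := by
  set d := t ^ 2 * B ^ 2 / 2
  set G : ℕ → Ω → ℝ := fun n ω => Real.exp (t * ∑ u ∈ Finset.Icc 1 n, X u ω - n * d)
  set g : ℕ → Ω → ℝ := fun n ω => Real.exp (t * X (n + 1) ω - d)
  have hstep (n : ℕ) : G (n + 1) = G n * g n := by
    funext ω
    simp only [G, g, Pi.mul_apply, ← Real.exp_add, Finset.sum_Icc_succ_top (Nat.le_add_left 1 n)]
    push_cast
    ring_nf
  have hadapted : StronglyAdapted ℱ G := fun n =>
    Real.continuous_exp.comp_stronglyMeasurable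
      ((Finset.stronglyMeasurable_fun_sum _ fun u hu =>
        (hXm u (Finset.mem_Icc.1 hu).1).mono (ℱ.mono (Finset.mem_Icc.1 hu).2)).const_mul t
        |>.sub stronglyMeasurable_const)
  have hgm (n : ℕ) : AEStronglyMeasurable (g n) μ :=
    (Real.continuous_exp.comp_stronglyMeasurable
      ((((hXm (n + 1) n.succ_pos).mono (ℱ.le _)).const_mul t).sub
        stronglyMeasurable_const)).aestronglyMeasurable
  have hgB (n : ℕ) : ∀ᵐ ω ∂μ, ‖g n ω‖ ≤ Real.exp (|t| * B - d) := by
    filter_upwards [hXB (n + 1) n.succ_pos] with ω h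
    rw [Real.norm_of_nonneg (Real.exp_pos _).le, Real.exp_le_exp, sub_le_sub_iff_right]
    calc t * X (n + 1) ω ≤ |t| * |X (n + 1) ω| := (le_abs_self _).trans (abs_mul _ _).le
      _ ≤ |t| * B := by gcongr
  have hint (n : ℕ) : Integrable (G n) μ := by
    induction n with
    | zero => simp [G]
    | succ n ih => rw [hstep]; exact ih.mul_bdd (hgm n) (hgB n)
  have hgcond (n : ℕ) : μ[g n | ℱ n] ≤ᵐ[μ] 1 :=
    condExp_exp_mul_sub_le_one (ℱ.le n) hB
      ((hXm (n + 1) n.succ_pos).mono (ℱ.le _)).aestronglyMeasurable (hXB (n + 1) n.succ_pos)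
      (hX0 (n + 1) n.succ_pos) t
  refine supermartingale_nat hadapted hint fun n => ?_
  filter_upwards [condExp_mul_of_stronglyMeasurable_left (hadapted n) (hstep n ▸ hint (n + 1))
    ((integrable_const _).mono' (hgm n) (hgB n)), hgcond n] with ω hpull h
  rw [hstep, hpull, Pi.mul_apply]
  exact mul_le_of_le_one_right (Real.exp_pos _).le h

theorem MeasureTheory.Supermartingale.integral_stoppedValue_le [IsFiniteMeasure μ]
    {G : ℕ → Ω → ℝ} (hG : Supermartingale G ℱ μ)
    {τ : Ω → WithTop ℕ} (hτ : IsStoppingTime ℱ τ) {n : ℕ} (hτn : ∀ ω, τ ω ≤ n) :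
    ∫ ω, stoppedValue G τ ω ∂μ ≤ ∫ ω, G 0 ω ∂μ := by
  have h :=
    hG.neg.expected_stoppedValue_mono (isStoppingTime_const ℱ 0) hτ (fun _ => bot_le) hτn
  simp only [stoppedValue, Pi.neg_apply, integral_neg, neg_le_neg_iff] at h
  exact h

/-- **Ville's inequality**. -/
theorem MeasureTheory.Supermartingale.measure_exists_ge_le [IsFiniteMeasure μ]
    {G : ℕ → Ω → ℝ} (hG : Supermartingale G ℱ μ) (hG0 : 0 ≤ G) {ε : ℝ} (hε : 0 < ε) :
    μ {ω | ∃ n, ε ≤ G n ω} ≤ ENNReal.ofReal ((∫ ω, G 0 ω ∂μ) / ε) := by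
  have hunion : {ω | ∃ n, ε ≤ G n ω} = ⋃ n, {ω | ∃ k ≤ n, ε ≤ G k ω} := by
    ext ω
    simp only [Set.mem_ofPred_eq, Set.mem_iUnion]
    exact ⟨fun ⟨n, h⟩ => ⟨n, n, le_rfl, h⟩, fun ⟨_, k, _, h⟩ => ⟨k, h⟩⟩
  have hmono : Monotone fun n => {ω | ∃ k ≤ n, ε ≤ G k ω} :=
    fun _ _ hab _ ⟨k, hk, h⟩ => ⟨k, hk.trans hab, h⟩
  rw [hunion, hmono.measure_iUnion]
  refine iSup_le fun n => ?_
  set τ : Ω → WithTop ℕ := fun ω => (hittingBtwn G (Set.Ici ε) 0 n ω : ℕ)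
  have hτ : IsStoppingTime ℱ τ :=
    hG.stronglyAdapted.adapted.isStoppingTime_hittingBtwn measurableSet_Ici
  have hτn (ω : Ω) : τ ω ≤ n := WithTop.coe_le_coe.2 (hittingBtwn_le ω)
  have hsub : {ω | ∃ k ≤ n, ε ≤ G k ω} ⊆ {ω | ε ≤ stoppedValue G τ ω} :=
    fun _ ⟨k, hk, h⟩ => stoppedValue_hittingBtwn_mem ⟨k, ⟨Nat.zero_le k, hk⟩, h⟩
  have hint : Integrable (stoppedValue G τ) μ := by
    simpa [stoppedValue] using (hG.neg.integrable_stoppedValue hτ hτn).neg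
  have hmarkov := mul_meas_ge_le_integral_of_nonneg
    (Filter.Eventually.of_forall fun ω => hG0 _ ω) hint ε
  calc μ {ω | ∃ k ≤ n, ε ≤ G k ω} ≤ μ {ω | ε ≤ stoppedValue G τ ω} := measure_mono hsub
    _ = ENNReal.ofReal (μ.real {ω | ε ≤ stoppedValue G τ ω}) :=
      (ofReal_measureReal (measure_ne_top μ _)).symm
    _ ≤ ENNReal.ofReal ((∫ ω, G 0 ω ∂μ) / ε) := by
      refine ENNReal.ofReal_le_ofReal ?_
      rw [le_div_iff₀' hε]
      exact hmarkov.trans (hG.integral_stoppedValue_le hτ hτn)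

theorem measure_exists_le_mul_sum_sub_le [IsProbabilityMeasure μ] {X : ℕ → Ω → ℝ} {B : ℝ}
    (hB : 0 < B) (hXm : ∀ n, 1 ≤ n → StronglyMeasurable[ℱ n] (X n))
    (hXB : ∀ n, 1 ≤ n → ∀ᵐ ω ∂μ, |X n ω| ≤ B)
    (hX0 : ∀ n, 1 ≤ n → μ[X n | ℱ (n - 1)] =ᵐ[μ] 0) (t a : ℝ) :
    μ {ω | ∃ n : ℕ, a ≤ t * ∑ u ∈ Finset.Icc 1 n, X u ω - n * (t ^ 2 * B ^ 2 / 2)}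
      ≤ ENNReal.ofReal (Real.exp (-a)) := by
  calc _ ≤ μ {ω | ∃ n : ℕ, Real.exp a ≤
        Real.exp (t * ∑ u ∈ Finset.Icc 1 n, X u ω - n * (t ^ 2 * B ^ 2 / 2))} :=
        measure_mono <| Set.ofPred_subset_ofPred.2 fun _ ⟨n, h⟩ => ⟨n, Real.exp_le_exp.2 h⟩
    _ ≤ _ := (supermartingale_exp_mul_sum_sub hB hXm hXB hX0 t).measure_exists_ge_le
        (fun n ω => (Real.exp_pos _).le) (Real.exp_pos a)
    _ = ENNReal.ofReal (Real.exp (-a)) := by simp [Real.exp_neg]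

theorem condExp_sub_const_ae_eq_zero [IsFiniteMeasure μ] (hm : m ≤ m0) {Y : Ω → ℝ} {a : ℝ}
    (hY : Integrable Y μ) (h : μ[Y | m] =ᵐ[μ] fun _ => a) :
    μ[fun ω => Y ω - a | m] =ᵐ[μ] 0 := by
  filter_upwards [condExp_sub hY (integrable_const a) m, h] with ω hsub hYa
  rw [← Pi.sub_def, hsub, Pi.sub_apply, hYa, condExp_const hm, sub_self, Pi.zero_apply]

theorem measure_exists_le_mul_sum_sub_le_of_condExp_eq [IsProbabilityMeasure μ]
    {Z : ℕ → Ω → ℝ} {f B : ℝ} (hB : 0 < B) (hf : f ∈ Set.Icc 0 B)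
    (hZm : ∀ n, 1 ≤ n → StronglyMeasurable[ℱ n] (Z n))
    (hZB : ∀ n, 1 ≤ n → ∀ᵐ ω ∂μ, 0 ≤ Z n ω ∧ Z n ω ≤ B)
    (hZf : ∀ n, 1 ≤ n → μ[Z n | ℱ (n - 1)] =ᵐ[μ] fun _ => f) (t a : ℝ) :
    μ {ω | ∃ n : ℕ, a ≤
        t * ∑ u ∈ Finset.Icc 1 n, (Z u ω - f) - n * (t ^ 2 * B ^ 2 / 2)}
      ≤ ENNReal.ofReal (Real.exp (-a)) := by
  refine measure_exists_le_mul_sum_sub_le hB (fun n hn => (hZm n hn).sub stronglyMeasurable_const)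
    (fun n hn => ?_) (fun n hn => condExp_sub_const_ae_eq_zero (ℱ.le _) ?_ (hZf n hn)) t a
  · filter_upwards [hZB n hn] with ω ⟨hZ0, hZ1⟩
    exact abs_sub_le_of_nonneg_of_le hZ0 hZ1 hf.1 hf.2
  · exact Integrable.of_mem_Icc 0 B ((hZm n hn).mono (ℱ.le n)).measurable.aemeasurable (hZB n hn)

theorem measure_iUnion_le_of_forall_le_div [IsFiniteMeasure μ] {ι : Type*} [Fintype ι]
    {s : ι → Set Ω} {r : ℝ} (hr : 0 ≤ r)
    (h : ∀ i, μ (s i) ≤ ENNReal.ofReal (r / Fintype.card ι)) :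
    μ (⋃ i, s i) ≤ ENNReal.ofReal r := calc
  μ (⋃ i, s i) ≤ ∑ i, μ (s i) := measure_iUnion_fintype_le μ s
  _ ≤ ∑ _i : ι, ENNReal.ofReal (r / Fintype.card ι) := Finset.sum_le_sum fun i _ => h i
  _ = ENNReal.ofReal (Fintype.card ι * (r / Fintype.card ι)) := by
    rw [Finset.sum_const, Finset.card_univ, nsmul_eq_mul,
      ENNReal.ofReal_mul (Nat.cast_nonneg _), ENNReal.ofReal_natCast]
  _ ≤ ENNReal.ofReal r := by
    refine ENNReal.ofReal_le_ofReal ?_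
    rw [mul_div_left_comm]
    exact mul_le_of_le_one_right hr (div_self_le_one _)

theorem one_sub_le_measure_of_measure_compl_le [IsProbabilityMeasure μ] {s : Set Ω}
    {ε : ℝ≥0∞} (h : μ sᶜ ≤ ε) : 1 - ε ≤ μ s := by
  refine tsub_le_iff_left.2 ((measure_univ (μ := μ) ▸ measure_univ_le_add_compl sᶜ).trans ?_)
  rw [compl_compl]
  exact add_le_add_left h _

end

theorem mul_le_sq_mul_of_sqrt_le {c N M η : ℝ} (hc : 1 ≤ c) (hN : 1 ≤ N)
    (h : √(3 * c / N * (2 * Real.log (Real.log (3 * c * N)) + M)) ≤ η / 2) :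
    12 * c * M ≤ η ^ 2 * N := by
  have hloglog : 0 ≤ Real.log (Real.log (3 * c * N)) := by
    refine Real.log_nonneg ((Real.le_log_iff_exp_le (by positivity)).2 ?_)
    nlinarith [Real.exp_one_lt_d9]
  have hsq := (Real.sqrt_le_iff.1 h).2
  have hM : 3 * c / N * M ≤ (η / 2) ^ 2 := by
    nlinarith [div_nonneg (by positivity : (0:ℝ) ≤ 3 * c) (by positivity : (0:ℝ) ≤ N)]
  rw [div_mul_eq_mul_div, div_le_iff₀ (by positivity)] at hM
  linarith

theorem sum_lt_of_mul_sub_lt {c N M S η : ℝ} (hc : 0 < c) (hN : 0 < N) (hη : 0 < η)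
    (hS : η / (2 * c) * S - N * ((η / (2 * c)) ^ 2 * c / 2) < M)
    (hM : 12 * c * M ≤ η ^ 2 * N) : S < η / 2 * N := by
  have h : S < η / 4 * N + 2 * c * M / η := by
    have := mul_lt_mul_of_pos_left hS (by positivity : 0 < 2 * c / η)
    field_simp at this ⊢
    linarith
  have h' : 2 * c * M / η ≤ η / 6 * N := by
    rw [div_le_iff₀ hη]; nlinarith
  nlinarith [mul_pos hη hN]

theorem sub_le_of_le_mean {c η M α f : ℝ} {n : ℕ} {z : ℕ → ℝ} (hc : 1 ≤ c) (hη : 0 < η)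
    (hf : 0 ≤ f)
    (hψ : √(3 * c / n * (2 * Real.log (Real.log (3 * c * n)) + M)) ≤ η / 2)
    (hdev : η / (2 * c) * ∑ u ∈ Finset.Icc 1 n, (z u - f)
      - n * ((η / (2 * c)) ^ 2 * c / 2) < M)
    (hmean : α - η / 2 ≤ 1 / n * ∑ u ∈ Finset.Icc 1 n, z u) :
    α - f ≤ η := by
  rcases n.eq_zero_or_pos with rfl | hn
  · simp only [CharP.cast_eq_zero] at hmean
    linarith
  have hN : (1 : ℝ) ≤ n := Nat.one_le_cast.2 hn
  have hS := sum_lt_of_mul_sub_lt (by linarith) (by linarith) hη hdev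
    (mul_le_sq_mul_of_sqrt_le hc hN hψ)
  rw [Finset.sum_sub_distrib, Finset.sum_const, Nat.card_Icc, Nat.add_sub_cancel,
    nsmul_eq_mul] at hS
  rw [one_div, le_inv_mul_iff₀ (by linarith)] at hmean
  nlinarith

theorem stmt_12_general
    {Ω : Type*} [m : MeasurableSpace Ω] (P : Measure Ω) [IsProbabilityMeasure P]
    {Λ : Type*} [Fintype Λ]
    (ℱ : Filtration ℕ m) (p : ℝ) (hp : p ∈ Set.Ioc (0 : ℝ) 1)
    (L : ℝ) (hL : L = Fintype.card Λ)
    (F : Λ → ℝ) (hF : ∀ l, F l ∈ Set.Icc (0 : ℝ) 1)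
    (Z : Λ → ℕ → Ω → ℝ)
    (hmeas : ∀ l, ∀ n, 1 ≤ n → StronglyMeasurable[ℱ n] (Z l n))
    (hbdd : ∀ l, ∀ n, 1 ≤ n → ∀ᵐ ω ∂P, 0 ≤ Z l n ω ∧ Z l n ω ≤ 1 / p)
    (hcond : ∀ l, ∀ n, 1 ≤ n → P[Z l n | ℱ (n - 1)] =ᵐ[P] fun _ => F l)
    (Fhat : Λ → ℕ → Ω → ℝ)
    (hFhat : ∀ l n, Fhat l n = fun ω => (1 / (n : ℝ)) * ∑ u ∈ Finset.Icc 1 n, Z l u ω)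
    (c : ℝ) (hc : c = 1 / p ^ 2)
    (ψ : ℝ → ℝ → ℝ)
    (hψ : ∀ N δ, ψ N δ =
      Real.sqrt ((3 * c / N) * (2 * Real.log (Real.log (3 * c * N)) + Real.log (2 * L / δ))))
    (α δ η : ℝ) (hδ : δ ∈ Set.Ioo (0 : ℝ) 1)
    (hη : η ∈ Set.Ioo (0 : ℝ) 1)
    (lstar : Λ) (hlstar : F lstar = α)
    (n₀ : ℕ) :
    (1 : ℝ≥0∞) - ENNReal.ofReal δ ≤
      P {ω | ∀ n, n₀ ≤ n → ψ n δ ≤ η / 2 →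
        ∀ l, α - η / 2 ≤ Fhat l n ω → F lstar - F l ≤ η} := by
  obtain ⟨hp0, hp1⟩ := hp
  obtain ⟨hδ0, -⟩ := hδ
  obtain ⟨hη0, -⟩ := hη
  have hc1 : 1 ≤ c := by rw [hc]; exact one_le_one_div (by positivity) (pow_le_one₀ hp0.le hp1)
  set t := η / (2 * c)
  set bad : Λ → Set Ω := fun l => {ω | ∃ n : ℕ, Real.log (2 * L / δ) ≤
    t * ∑ u ∈ Finset.Icc 1 n, (Z l u ω - F l) - n * (t ^ 2 * (1 / p) ^ 2 / 2)}
  have hbad (l : Λ) : P (bad l) ≤ ENNReal.ofReal (δ / 2 / Fintype.card Λ) := by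
    have hL0 : 0 < L := hL ▸ Nat.cast_pos.2 (Fintype.card_pos_iff.2 ⟨l⟩)
    refine (measure_exists_le_mul_sum_sub_le_of_condExp_eq (one_div_pos.2 hp0)
      ⟨(hF l).1, (hF l).2.trans (one_le_one_div hp0 hp1)⟩ (hmeas l) (hbdd l) (hcond l)
      t _).trans_eq ?_
    rw [Real.exp_neg, Real.exp_log (by positivity), inv_div, div_div, ← hL]
  have hgood : {ω | ∀ n, n₀ ≤ n → ψ n δ ≤ η / 2 →
      ∀ l, α - η / 2 ≤ Fhat l n ω → F lstar - F l ≤ η}ᶜ ⊆ ⋃ l, bad l := by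
    refine Set.compl_subset_comm.1 fun ω hω n _ hψn l hmean => ?_
    simp only [bad, Set.mem_compl_iff, Set.mem_iUnion, Set.mem_ofPred_eq, not_exists, not_le,
      div_pow, one_pow, ← hc] at hω
    rw [hlstar]
    exact sub_le_of_le_mean hc1 hη0 (hF l).1 (hψ n δ ▸ hψn) (hω l n)
      (by rw [hFhat] at hmean; exact hmean)
  refine one_sub_le_measure_of_measure_compl_le ((measure_mono hgood).trans ?_)
  exact (measure_iUnion_le_of_forall_le_div (by positivity) hbad).trans
    (ENNReal.ofReal_le_ofReal (by linarith))

/-- η-optimality: if `lstar` is the optimal threshold with true FPR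
`F lstar = α`, then with probability at least `1 - δ`, simultaneously for all
`n ≥ n₀(δ)` with `ψ(n, δ) ≤ η/2` and all grid thresholds `l`, whenever the
empirical FPR of `l` is at least `α - η/2`, one has `F lstar - F l ≤ η`. -/
theorem stmt_12
    {Ω : Type*} [m : MeasurableSpace Ω] (P : Measure Ω) [IsProbabilityMeasure P]
    {Λ : Type*} [Fintype Λ] [Nonempty Λ]
    (ℱ : Filtration ℕ m) (p : ℝ) (hp : p ∈ Set.Ioc (0 : ℝ) 1)
    (L : ℝ) (hL : L = Fintype.card Λ)
    (F : Λ → ℝ) (hF : ∀ l, F l ∈ Set.Icc (0 : ℝ) 1)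
    (Z : Λ → ℕ → Ω → ℝ)
    (hmeas : ∀ l, ∀ n, 1 ≤ n → StronglyMeasurable[ℱ n] (Z l n))
    (hbdd : ∀ l, ∀ n, 1 ≤ n → ∀ᵐ ω ∂P, 0 ≤ Z l n ω ∧ Z l n ω ≤ 1 / p)
    (hcond : ∀ l, ∀ n, 1 ≤ n → P[Z l n | ℱ (n - 1)] =ᵐ[P] fun _ => F l)
    (Fhat : Λ → ℕ → Ω → ℝ)
    (hFhat : ∀ l n, Fhat l n = fun ω => (1 / (n : ℝ)) * ∑ u ∈ Finset.Icc 1 n, Z l u ω)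
    (c : ℝ) (hc : c = 1 / p ^ 2)
    (ψ : ℝ → ℝ → ℝ)
    (hψ : ∀ N δ, ψ N δ =
      Real.sqrt ((3 * c / N) * (2 * Real.log (Real.log (3 * c * N)) + Real.log (2 * L / δ))))
    (α δ η : ℝ) (hα : α ∈ Set.Ioo (0 : ℝ) 1) (hδ : δ ∈ Set.Ioo (0 : ℝ) 1)
    (hη : η ∈ Set.Ioo (0 : ℝ) 1)
    (lstar : Λ) (hlstar : F lstar = α)
    (n₀ : ℕ) (hn₀ : IsLeast {u : ℕ | 1 ≤ u ∧ 173 * Real.log (4 * L / δ) ≤ c * u} n₀) :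
    (1 : ℝ≥0∞) - ENNReal.ofReal δ ≤
      P {ω | ∀ n, n₀ ≤ n → ψ n δ ≤ η / 2 →
        ∀ l, α - η / 2 ≤ Fhat l n ω → F lstar - F l ≤ η} :=
  stmt_12_general (m := m) P ℱ p hp L hL F hF Z hmeas hbdd hcond Fhat hFhat c hc ψ hψ α δ η hδ hη
    lstar hlstar n₀
end

section
/- There exist absolute constants c_1, c_2, c_3 > 0 such that the following holds. Let γ ∈ (0,1), δ ∈ (0,1), α ∈ (0,1), c ≥ 1, and L ≥ 10, and define ψ(N, δ) = sqrt( (3c/N) ( 2 log log(3cN) + log(2L/δ) ) ) for N > 0 and N* = (c_1 · c / α²) · log( (c_2 · L / δ) · log(c_3 · c / α) ). Let X_1, X_2, … be i.i.d. Bernoulli(γ) random variables and N_t = Σ_{i=1}^t X_i. Then for every integer t ≥ (2/γ)·N* + (1/γ²)·log(2/δ), with probability at least 1 − δ/2 we have N_t ≥ N* and ψ(N_t, δ) ≤ α. -/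
/-!
Hoeffding's inequality for the `[0, 1]`-valued arrivals gives
`P(N_t ≤ N*) ≤ exp(-2 (tγ - N*)² / t) ≤ exp(-2 (tγ² - 2γN*))`, and the lower bound on `t`
makes this at most `δ / 2`. On the complementary event `N* ≤ N_t` it suffices to bound `ψ` at
`N*` itself, because `(2 log log (3cN) + B) / N` is at most its value at `N₀` plus `2 / N₀`
for all `N ≥ N₀`. With `c₁ = 12` and `c₂ = c₃ = e`, the threshold is `N* = 12 c E / α²` for
`E = log (e (L/δ) (1 + log (c/α)))`, and `log log (3cN*) ≤ E`, which gives `ψ(N*)² ≤ α²`.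
-/

open MeasureTheory ProbabilityTheory ENNReal

section Hoeffding

variable {Ω ι : Type*} [MeasurableSpace Ω] {μ : Measure Ω}

lemma measureReal_sum_le_le_of_iIndepFun_of_mem_Icc [IsProbabilityMeasure μ] {X : ι → Ω → ℝ}
    (h_indep : iIndepFun X μ) (hX : ∀ i, AEMeasurable (X i) μ)
    (h01 : ∀ i, ∀ᵐ ω ∂μ, X i ω ∈ Set.Icc 0 1) (s : Finset ι) {a : ℝ}
    (ha : a ≤ ∑ i ∈ s, μ[X i]) :
    μ.real {ω | ∑ i ∈ s, X i ω ≤ a} ≤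
      Real.exp (-2 * (∑ i ∈ s, μ[X i] - a) ^ 2 / s.card) := by
  set Y : ι → Ω → ℝ := fun i ω ↦ μ[X i] - X i ω
  have hY_indep : iIndepFun Y μ :=
    h_indep.comp (fun i y ↦ ∫ ω, X i ω ∂μ - y) fun _ ↦ by fun_prop
  have hY_subG : ∀ i ∈ s, HasSubgaussianMGF (Y i) (1 / 4) μ := by
    intro i _
    have hY_mem : ∀ᵐ ω ∂μ, Y i ω ∈ Set.Icc (μ[X i] - 1) μ[X i] := by
      filter_upwards [h01 i] with ω hω
      exact ⟨by linarith [hω.2], by linarith [hω.1]⟩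
    have hY_mean : μ[Y i] = 0 := by
      rw [integral_sub (integrable_const _) (Integrable.of_mem_Icc 0 1 (hX i) (h01 i)),
        integral_const, probReal_univ, one_smul, sub_self]
    have hparam : (‖μ[X i] - (μ[X i] - 1)‖₊ / 2) ^ 2 = (1 / 4 : NNReal) := by
      rw [_root_.sub_sub_cancel, nnnorm_one]; norm_num
    simpa only [hparam] using hasSubgaussianMGF_of_mem_Icc_of_integral_eq_zero
      ((hX i).const_sub _) hY_mem hY_mean
  have hevent : {ω | ∑ i ∈ s, X i ω ≤ a} = {ω | ∑ i ∈ s, μ[X i] - a ≤ ∑ i ∈ s, Y i ω} := by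
    ext ω
    simp only [Set.mem_ofPred_eq, Y, Finset.sum_sub_distrib]
    constructor <;> intro h <;> linarith
  rw [hevent]
  refine (HasSubgaussianMGF.measure_sum_ge_le_of_iIndepFun hY_indep hY_subG
    (sub_nonneg.mpr ha)).trans_eq ?_
  congr 1
  push_cast
  rw [Finset.sum_const, nsmul_eq_mul]
  ring

lemma integral_eq_measureReal_of_forall_eq_zero_or_eq_one {X : Ω → ℝ} (hX : Measurable X)
    (h01 : ∀ ω, X ω = 0 ∨ X ω = 1) : μ[X] = μ.real {ω | X ω = 1} := by
  have hX_eq : X = Set.indicator {ω | X ω = 1} 1 := by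
    ext ω
    rcases h01 ω with h | h <;> simp [h]
  conv_lhs => rw [hX_eq]
  exact integral_indicator_one (hX (measurableSet_singleton 1))

lemma one_sub_ofReal_le_measure_le_sum_of_bernoulli [IsProbabilityMeasure μ]
    {X : ι → Ω → ℝ} (h_indep : iIndepFun X μ) (hX : ∀ i, Measurable (X i))
    (h01 : ∀ i ω, X i ω = 0 ∨ X i ω = 1) {γ : ℝ} (hγ : 0 < γ)
    (hX_one : ∀ i, μ {ω | X i ω = 1} = ENNReal.ofReal γ) {δ : ℝ} (hδ : 0 < δ) (hδ2 : δ < 2)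
    {a : ℝ} (ha : 0 ≤ a) (s : Finset ι)
    (hs : 2 / γ * a + 1 / γ ^ 2 * Real.log (2 / δ) ≤ s.card) :
    1 - ENNReal.ofReal (δ / 2) ≤ μ {ω | a ≤ ∑ i ∈ s, X i ω} := by
  set n : ℝ := (s.card : ℝ)
  set ℓ := Real.log (2 / δ)
  have hℓ : 0 < ℓ := Real.log_pos (by rw [lt_div_iff₀ hδ]; linarith)
  have hmean : ∑ i ∈ s, μ[X i] = n * γ := by
    simp only [integral_eq_measureReal_of_forall_eq_zero_or_eq_one (hX _) (h01 _), measureReal_def,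
      hX_one, ENNReal.toReal_ofReal hγ.le, Finset.sum_const, nsmul_eq_mul, n]
  have hs' : 2 * a * γ + ℓ ≤ n * γ ^ 2 := by
    have := mul_le_mul_of_nonneg_right hs (sq_nonneg γ)
    rwa [add_mul, show 2 / γ * a * γ ^ 2 = 2 * a * γ by field_simp,
      show 1 / γ ^ 2 * ℓ * γ ^ 2 = ℓ by field_simp] at this
  have hn : 0 < n := by nlinarith [mul_nonneg ha hγ.le]
  have ha_le : a ≤ n * γ := by nlinarith
  -- `2 (nγ - a)² / n ≥ 2 (nγ² - 2aγ) ≥ 2ℓ`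
  have hexponent : ℓ ≤ 2 * (n * γ - a) ^ 2 / n := by
    rw [le_div_iff₀ hn]; nlinarith [sq_nonneg a]
  have htail : μ.real {ω | ∑ i ∈ s, X i ω ≤ a} ≤ δ / 2 := by
    have h01' : ∀ i, ∀ᵐ ω ∂μ, X i ω ∈ Set.Icc (0 : ℝ) 1 := fun i ↦ ae_of_all _ fun ω ↦ by
      rcases h01 i ω with h | h <;> simp [h]
    calc μ.real {ω | ∑ i ∈ s, X i ω ≤ a}
        ≤ Real.exp (-2 * (n * γ - a) ^ 2 / n) := by
          rw [← hmean]
          exact measureReal_sum_le_le_of_iIndepFun_of_mem_Icc h_indep (fun i ↦ (hX i).aemeasurable) h01' s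
            (hmean ▸ ha_le)
      _ ≤ Real.exp (-ℓ) := by rw [Real.exp_le_exp, neg_mul, neg_div]; linarith
      _ = δ / 2 := by rw [Real.exp_neg, Real.exp_log (by positivity), inv_div]
  have hmeas : MeasurableSet {ω | ∑ i ∈ s, X i ω ≤ a} :=
    measurableSet_le (Finset.measurable_sum _ fun i _ ↦ hX i) measurable_const
  calc 1 - ENNReal.ofReal (δ / 2) ≤ 1 - μ {ω | ∑ i ∈ s, X i ω ≤ a} := by
        gcongr
        rw [← ENNReal.ofReal_toReal (measure_ne_top μ _)]
        exact ENNReal.ofReal_le_ofReal htail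
    _ = μ {ω | ∑ i ∈ s, X i ω ≤ a}ᶜ := (prob_compl_eq_one_sub hmeas).symm
    _ ≤ μ {ω | a ≤ ∑ i ∈ s, X i ω} :=
        measure_mono fun _ hω ↦ (not_le.mp (Set.notMem_ofPred_iff.mp hω)).le

end Hoeffding

lemma log_log_mul_le {M q : ℝ} (hM : 1 ≤ Real.log M) (hq : 1 ≤ q) :
    Real.log (Real.log (M * q)) ≤ Real.log (Real.log M) + (q - 1) := by
  have hM0 : M ≠ 0 := by rintro rfl; norm_num at hM
  have hlog_q := Real.log_le_sub_one_of_pos (by linarith : 0 < q)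
  have hlog_q0 := Real.log_nonneg hq
  rw [Real.log_mul hM0 (by positivity)]
  calc Real.log (Real.log M + Real.log q)
      ≤ Real.log (Real.log M * q) := Real.log_le_log (by linarith) (by nlinarith)
    _ = Real.log (Real.log M) + Real.log q := Real.log_mul (by positivity) (by positivity)
    _ ≤ Real.log (Real.log M) + (q - 1) := by linarith

lemma two_mul_log_log_add_div_le {κ B N₀ N : ℝ} (hB : 0 ≤ B) (hN₀ : 0 < N₀)
    (hκN₀ : 1 ≤ Real.log (κ * N₀)) (hN : N₀ ≤ N) :
    (2 * Real.log (Real.log (κ * N)) + B) / N ≤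
      (2 * Real.log (Real.log (κ * N₀)) + B + 2) / N₀ := by
  set q := N / N₀
  have hq : 1 ≤ q := (one_le_div hN₀).mpr hN
  have hNq : N = N₀ * q := (mul_div_cancel₀ N hN₀.ne').symm
  have hLL := log_log_mul_le hκN₀ hq
  have hLL₀ : 0 ≤ Real.log (Real.log (κ * N₀)) := Real.log_nonneg hκN₀
  rw [hNq, ← mul_assoc, div_le_div_iff₀ (by positivity) hN₀]
  nlinarith [mul_nonneg (sub_nonneg.mpr hq) (add_nonneg (mul_nonneg zero_le_two hLL₀) hB)]

section Threshold

variable {r D : ℝ}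

lemma three_le_log_exp_one_mul (hr : 1 ≤ r) (hD : 10 ≤ D) :
    3 ≤ Real.log (Real.exp 1 * D * (1 + Real.log r)) := by
  have he := Real.exp_one_lt_d9
  have hu := Real.log_nonneg hr
  rw [Real.le_log_iff_exp_le (by positivity), show (3 : ℝ) = 1 + 2 by norm_num, Real.exp_add,
    show (2 : ℝ) = 1 + 1 by norm_num, Real.exp_add]
  have he2 : Real.exp 1 * Real.exp 1 ≤ 10 := by nlinarith [Real.exp_pos 1]
  have hD' : 10 ≤ D * (1 + Real.log r) := by nlinarith
  nlinarith [Real.exp_pos 1]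

lemma log_two_mul_le_log_exp_one_mul (hr : 1 ≤ r) (hD : 10 ≤ D) :
    Real.log (2 * D) ≤ Real.log (Real.exp 1 * D * (1 + Real.log r)) := by
  have he := Real.exp_one_gt_d9
  have hu := Real.log_nonneg hr
  have h2 : 2 ≤ Real.exp 1 * (1 + Real.log r) := by nlinarith
  exact Real.log_le_log (by positivity) (by nlinarith)

lemma log_mul_sq_mul_log_exp_one_mul_le (hr : 1 ≤ r) (hD : 10 ≤ D) :
    Real.log (36 * r ^ 2 * Real.log (Real.exp 1 * D * (1 + Real.log r))) ≤
      Real.exp (Real.log (Real.exp 1 * D * (1 + Real.log r))) := by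
  set E := Real.log (Real.exp 1 * D * (1 + Real.log r))
  have hE := three_le_log_exp_one_mul hr hD
  have hu := Real.log_nonneg hr
  have he := Real.exp_one_gt_d9
  have hlog36 : Real.log 36 ≤ 4 := by
    rw [Real.log_le_iff_le_exp (by norm_num), show (4 : ℝ) = 1 + 1 + 1 + 1 by norm_num]
    simp only [Real.exp_add]
    have he2 : 7 ≤ Real.exp 1 * Real.exp 1 := by nlinarith
    nlinarith
  have hlogE := Real.log_le_sub_one_of_pos (by linarith : 0 < E)
  have hexp_quadratic := Real.quadratic_le_exp_of_nonneg (by linarith : 0 ≤ E)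
  have hexpE : Real.exp E = Real.exp 1 * D * (1 + Real.log r) := Real.exp_log (by positivity)
  rw [Real.log_mul (by positivity) (by positivity), Real.log_mul (by norm_num) (by positivity),
    Real.log_pow]
  have h2E : 2 * E ≤ Real.exp E := by nlinarith [sq_nonneg (E - 1)]
  have h27 : 27 * (1 + Real.log r) ≤ Real.exp E := by
    rw [hexpE]
    have : 27 ≤ Real.exp 1 * D := by nlinarith
    nlinarith
  push_cast
  linarith

end Threshold

lemma log_exp_one_mul_div_mul_log_exp_one_mul_div {c L δ α : ℝ} (hc : c ≠ 0) (hα : α ≠ 0) :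
    Real.log (Real.exp 1 * L / δ * Real.log (Real.exp 1 * c / α)) =
      Real.log (Real.exp 1 * (L / δ) * (1 + Real.log (c / α))) := by
  rw [mul_div_assoc (Real.exp 1) L, mul_div_assoc (Real.exp 1) c,
    Real.log_mul (Real.exp_ne_zero 1) (div_ne_zero hc hα), Real.log_exp]

/-- The paper's law-of-the-iterated-logarithm confidence radius `ψ(N, δ)`. -/
noncomputable def lilRadius (c L δ N : ℝ) : ℝ :=
  √((3 * c / N) * (2 * Real.log (Real.log (3 * c * N)) + Real.log (2 * L / δ)))

lemma lilRadius_le_of_le {c L δ α N : ℝ} (hα : 0 < α) (hαc : α ≤ c) (hLδ : 10 ≤ L / δ)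
    (hN : 12 * c / α ^ 2 * Real.log (Real.exp 1 * L / δ * Real.log (Real.exp 1 * c / α)) ≤ N) :
    lilRadius c L δ N ≤ α := by
  have hr : 1 ≤ c / α := (one_le_div hα).mpr hαc
  have hc : 0 < c := hα.trans_le hαc
  rw [log_exp_one_mul_div_mul_log_exp_one_mul_div hc.ne' hα.ne'] at hN
  set E := Real.log (Real.exp 1 * (L / δ) * (1 + Real.log (c / α)))
  have hE := three_le_log_exp_one_mul hr hLδ
  set N₀ := 12 * c / α ^ 2 * E
  have hN₀ : 0 < N₀ := by positivity
  have h3cN₀ : 3 * c * N₀ = 36 * (c / α) ^ 2 * E := by simp only [N₀]; field_simp; ring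
  have hlog3cN₀ := log_mul_sq_mul_log_exp_one_mul_le hr hLδ
  rw [← h3cN₀] at hlog3cN₀
  have hone_le : 1 ≤ Real.log (3 * c * N₀) := by
    rw [Real.le_log_iff_exp_le (by positivity), h3cN₀]
    nlinarith [Real.exp_one_lt_d9, pow_le_pow_left₀ zero_le_one hr 2]
  have hloglog : Real.log (Real.log (3 * c * N₀)) ≤ E :=
    calc Real.log (Real.log (3 * c * N₀)) ≤ Real.log (Real.exp E) :=
          Real.log_le_log (by linarith) hlog3cN₀
      _ = E := Real.log_exp E
  have hB : Real.log (2 * L / δ) ≤ E := by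
    rw [mul_div_assoc]; exact log_two_mul_le_log_exp_one_mul hr hLδ
  have hdecay := two_mul_log_log_add_div_le (κ := 3 * c) (B := Real.log (2 * L / δ))
    (Real.log_nonneg (by rw [mul_div_assoc]; linarith)) hN₀ hone_le hN
  have hsq : (3 * c / N) * (2 * Real.log (Real.log (3 * c * N)) + Real.log (2 * L / δ)) ≤ α ^ 2 :=
    calc (3 * c / N) * (2 * Real.log (Real.log (3 * c * N)) + Real.log (2 * L / δ))
        = 3 * c * ((2 * Real.log (Real.log (3 * c * N)) + Real.log (2 * L / δ)) / N) := by ring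
      _ ≤ 3 * c * (4 * E / N₀) := by
          refine mul_le_mul_of_nonneg_left (hdecay.trans ?_) (by positivity)
          exact div_le_div_of_nonneg_right (by linarith) hN₀.le
      _ = α ^ 2 := by
          have hE0 : E ≠ 0 := by linarith
          simp only [N₀]; field_simp; ring
  rw [lilRadius]
  exact Real.sqrt_le_iff.mpr ⟨hα.le, hsq⟩

/-- Quantitative time bound `T_f` for feasibility: there exist absolute
constants `c₁, c₂, c₃ > 0` such that for i.i.d. Bernoulli(γ) arrivals `X i`
with OOD count `N t = ∑_{i=1}^t X i`, and `N* = (c₁ c / α²) log((c₂ L / δ)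
log(c₃ c / α))`, every integer `t ≥ (2/γ) N* + (1/γ²) log(2/δ)` satisfies,
with probability at least `1 - δ/2`, both `N t ≥ N*` and `ψ(N t, δ) ≤ α`. -/
theorem stmt_14 :
    ∃ c₁ c₂ c₃ : ℝ, 0 < c₁ ∧ 0 < c₂ ∧ 0 < c₃ ∧
      ∀ (Ω : Type) (mΩ : MeasurableSpace Ω) (P : Measure Ω), IsProbabilityMeasure P →
        ∀ γ δ α c L : ℝ,
          γ ∈ Set.Ioo (0 : ℝ) 1 → δ ∈ Set.Ioo (0 : ℝ) 1 → α ∈ Set.Ioo (0 : ℝ) 1 →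
          1 ≤ c → 10 ≤ L →
          ∀ X : ℕ → Ω → ℝ,
            (∀ i, Measurable (X i)) →
            iIndepFun X P →
            (∀ i, ∀ ω, X i ω = 0 ∨ X i ω = 1) →
            (∀ i, P {ω | X i ω = 1} = ENNReal.ofReal γ) →
            ∀ t : ℕ,
              (2 / γ) * ((c₁ * c / α ^ 2) *
                    Real.log ((c₂ * L / δ) * Real.log (c₃ * c / α)))
                  + (1 / γ ^ 2) * Real.log (2 / δ) ≤ (t : ℝ) →
              (1 : ℝ≥0∞) - ENNReal.ofReal (δ / 2) ≤
                P {ω |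
                  (c₁ * c / α ^ 2) * Real.log ((c₂ * L / δ) * Real.log (c₃ * c / α))
                      ≤ ∑ i ∈ Finset.Icc 1 t, X i ω ∧
                  Real.sqrt ((3 * c / ∑ i ∈ Finset.Icc 1 t, X i ω) *
                      (2 * Real.log (Real.log (3 * c * ∑ i ∈ Finset.Icc 1 t, X i ω))
                        + Real.log (2 * L / δ))) ≤ α} := by
  refine ⟨12, Real.exp 1, Real.exp 1, by norm_num, Real.exp_pos 1, Real.exp_pos 1, ?_⟩
  rintro Ω mΩ P hP γ δ α c L ⟨hγ, -⟩ ⟨hδ, hδ1⟩ ⟨hα, hα1⟩ hc hL X hXm hXi hX01 hXγ t ht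
  have hLδ : 10 ≤ L / δ := by rw [le_div_iff₀ hδ]; nlinarith
  have hN₀ : 0 ≤ 12 * c / α ^ 2 *
      Real.log (Real.exp 1 * L / δ * Real.log (Real.exp 1 * c / α)) := by
    rw [log_exp_one_mul_div_mul_log_exp_one_mul_div (by linarith) hα.ne']
    have := three_le_log_exp_one_mul ((one_le_div hα).mpr (by linarith : α ≤ c)) hLδ
    exact mul_nonneg (by positivity) (by linarith)
  refine (one_sub_ofReal_le_measure_le_sum_of_bernoulli hXi hXm hX01 hγ hXγ hδ (by linarith)
    hN₀ (Finset.Icc 1 t) (by simpa using ht)).trans (measure_mono fun ω hω ↦ ⟨hω, ?_⟩)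
  exact lilRadius_le_of_le hα (by linarith) hLδ hω
end
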